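/- arXiv:2002.04870 — 10 statements merged into one kernel-verified Lean document; each statement's English description precedes it below -/
import Mathlib

section
/- Let n, λ, B, s, t be positive integers with λ ≤ n and t ≤ s. Let 𝓑 be a family of exactly s subsets of {1,…,n}, each of cardinality at most B. Suppose that for every Q ⊆ {1,…,n} with |Q| = λ there exists a subfamily 𝓒 ⊆ 𝓑 with |𝓒| ≤ t such that 2·|Q ∩ ⋃𝓒| ≥ λ. Then C(n,λ) ≤ C(s,t) · C(t·B, ⌈λ/2⌉) · C(n, ⌊λ/2⌋), where C(·,·) denotes the binomial coefficient. -/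
/-!
Double counting. Every `λ`-set `Q` is the union of a `⌈λ/2⌉`-subset `S` of `⋃𝓒` and the
`⌊λ/2⌋`-set `Q \ S`, where `𝓒 ⊆ 𝓑` is a `t`-subfamily covering half of `Q` (padded up to exactly
`t` blocks). So `Q ↦ (𝓒, S, Q \ S)` can be inverted by `(𝓒, S, R) ↦ S ∪ R`, and there are at most
`C(s,t)` choices of `𝓒`, `C(tB, ⌈λ/2⌉)` of `S` (as `|⋃𝓒| ≤ tB`) and `C(n, ⌊λ/2⌋)` of `R`.
-/

namespace Finset

variable {α : Type*} [DecidableEq α]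

theorem card_sup_id_le_mul {𝓒 : Finset (Finset α)} {B : ℕ} (h : ∀ b ∈ 𝓒, b.card ≤ B) :
    (𝓒.sup id).card ≤ 𝓒.card * B :=
  calc (𝓒.sup id).card = (𝓒.biUnion id).card := by rw [sup_eq_biUnion]
    _ ≤ ∑ b ∈ 𝓒, b.card := card_biUnion_le
    _ ≤ ∑ _b ∈ 𝓒, B := sum_le_sum h
    _ = 𝓒.card * B := by rw [sum_const, smul_eq_mul]

theorem exists_powersetCard_le_two_mul_card_inter_sup {𝓑 𝓒 : Finset (Finset α)}
    {Q : Finset α} {t k : ℕ} (h𝓒𝓑 : 𝓒 ⊆ 𝓑) (h𝓒 : 𝓒.card ≤ t) (ht : t ≤ 𝓑.card)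
    (hcover : k ≤ 2 * (Q ∩ 𝓒.sup id).card) :
    ∃ 𝓓 ∈ 𝓑.powersetCard t, k ≤ 2 * (Q ∩ 𝓓.sup id).card := by
  obtain ⟨𝓓, h𝓒𝓓, h𝓓𝓑, h𝓓⟩ := exists_subsuperset_card_eq h𝓒𝓑 h𝓒 ht
  refine ⟨𝓓, mem_powersetCard.2 ⟨h𝓓𝓑, h𝓓⟩, hcover.trans ?_⟩
  gcongr

theorem exists_union_eq_of_le_card_inter {Q U : Finset α} {c : ℕ} (hc : c ≤ (Q ∩ U).card) :
    ∃ S ∈ U.powersetCard c, ∃ R : Finset α, R.card = Q.card - c ∧ S ∪ R = Q := by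
  obtain ⟨S, hSQU, hS⟩ := exists_subset_card_eq hc
  have hSQ : S ⊆ Q := hSQU.trans inter_subset_left
  refine ⟨S, mem_powersetCard.2 ⟨hSQU.trans inter_subset_right, hS⟩, Q \ S, ?_,
    union_sdiff_of_subset hSQ⟩
  rw [card_sdiff_of_subset hSQ, hS]

variable [Fintype α]

theorem card_sigma_powersetCard_sup_le {𝓑 : Finset (Finset α)} {B : ℕ}
    (hblocks : ∀ b ∈ 𝓑, b.card ≤ B) (t c m : ℕ) :
    ((𝓑.powersetCard t).sigma fun 𝓒 =>
        (𝓒.sup id).powersetCard c ×ˢ (univ : Finset α).powersetCard m).card ≤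
      𝓑.card.choose t * (t * B).choose c * (Fintype.card α).choose m := by
  rw [card_sigma, mul_assoc, ← card_powersetCard t 𝓑, ← smul_eq_mul, ← sum_const]
  refine sum_le_sum fun 𝓒 h𝓒 => ?_
  obtain ⟨h𝓒𝓑, h𝓒⟩ := mem_powersetCard.1 h𝓒
  have hsup : (𝓒.sup id).card ≤ t * B :=
    h𝓒 ▸ card_sup_id_le_mul fun b hb => hblocks b (h𝓒𝓑 hb)
  rw [card_product, card_powersetCard, card_powersetCard, card_univ]
  gcongr

theorem choose_card_le_of_forall_exists_union_eq {𝓑 : Finset (Finset α)} {B t k c : ℕ}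
    (hblocks : ∀ b ∈ 𝓑, b.card ≤ B)
    (hsplit : ∀ Q : Finset α, Q.card = k → ∃ 𝓒 ∈ 𝓑.powersetCard t,
      ∃ S ∈ (𝓒.sup id).powersetCard c, ∃ R : Finset α, R.card = k - c ∧ S ∪ R = Q) :
    (Fintype.card α).choose k ≤
      𝓑.card.choose t * (t * B).choose c * (Fintype.card α).choose (k - c) := by
  refine le_trans ?_ (card_sigma_powersetCard_sup_le hblocks t c (k - c))
  rw [← card_univ, ← card_powersetCard]
  refine card_le_card_of_surjOn (fun p => p.2.1 ∪ p.2.2) fun Q hQ => ?_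
  obtain ⟨𝓒, h𝓒, S, hS, R, hR, rfl⟩ := hsplit Q (mem_powersetCard.1 hQ).2
  exact ⟨⟨𝓒, S, R⟩, mem_sigma.2 ⟨h𝓒, mem_product.2 ⟨hS, mem_powersetCard.2 ⟨subset_univ R, hR⟩⟩⟩,
    rfl⟩

end Finset

theorem relaxed_set_workload_counting_general
    (n lam B s t : ℕ) (hts : t ≤ s)
    (𝓑 : Finset (Finset (Fin n))) (hcard : 𝓑.card = s)
    (hblocks : ∀ b ∈ 𝓑, b.card ≤ B)
    (hwork : ∀ Q : Finset (Fin n), Q.card = lam →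
      ∃ 𝓒 ⊆ 𝓑, 𝓒.card ≤ t ∧ lam ≤ 2 * (Q ∩ 𝓒.sup id).card) :
    Nat.choose n lam ≤
      Nat.choose s t * Nat.choose (t * B) ((lam + 1) / 2) * Nat.choose n (lam / 2) := by
  have hsplit : ∀ Q : Finset (Fin n), Q.card = lam → ∃ 𝓒 ∈ 𝓑.powersetCard t,
      ∃ S ∈ (𝓒.sup id).powersetCard ((lam + 1) / 2), ∃ R : Finset (Fin n),
        R.card = lam - (lam + 1) / 2 ∧ S ∪ R = Q := by
    intro Q hQ
    obtain ⟨𝓒', h𝓒'𝓑, h𝓒', hcover'⟩ := hwork Q hQ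
    obtain ⟨𝓒, h𝓒, hcover⟩ :=
      Finset.exists_powersetCard_le_two_mul_card_inter_sup h𝓒'𝓑 h𝓒' (hcard ▸ hts) hcover'
    exact ⟨𝓒, h𝓒, hQ ▸ Finset.exists_union_eq_of_le_card_inter (by omega)⟩
  have hbound := Finset.choose_card_le_of_forall_exists_union_eq hblocks hsplit
  rwa [Fintype.card_fin, hcard, show lam - (lam + 1) / 2 = lam / 2 by omega] at hbound

/-- counting inequality for the relaxed λ-set workload. -/
theorem relaxed_set_workload_counting
    (n lam B s t : ℕ) (hn : 0 < n) (hlam : 0 < lam) (hB : 0 < B)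
    (hs : 0 < s) (ht : 0 < t) (hln : lam ≤ n) (hts : t ≤ s)
    (𝓑 : Finset (Finset (Fin n))) (hcard : 𝓑.card = s)
    (hblocks : ∀ b ∈ 𝓑, b.card ≤ B)
    (hwork : ∀ Q : Finset (Fin n), Q.card = lam →
      ∃ 𝓒 ⊆ 𝓑, 𝓒.card ≤ t ∧ lam ≤ 2 * (Q ∩ 𝓒.sup id).card) :
    Nat.choose n lam ≤
      Nat.choose s t * Nat.choose (t * B) ((lam + 1) / 2) * Nat.choose n (lam / 2) :=
  relaxed_set_workload_counting_general n lam B s t hts 𝓑 hcard hblocks hwork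
end

section
/- Let n, λ, B, s, t be positive integers with λ even, λ ≤ n, and t ≤ s. Let 𝓑 be a family of exactly s subsets of {1,…,n}, each of cardinality at most B. Suppose that for every Q ⊆ {1,…,n} with |Q| = λ there exists a subfamily 𝓒 ⊆ 𝓑 with |𝓒| ≤ t such that 2·|Q ∩ ⋃𝓒| ≥ λ. Then, as real numbers, s^(2t/λ) ≥ n/(4·e²·t·B), where e = exp(1). -/
/-!
Write `λ = 2m`. Every `λ`-set contains an `m`-set lying in the union of some `t` blocks, and there
are at most `C(s, t) · C(tB, m)` such `m`-sets. A family of `m`-sets meeting every `2m`-set in one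
of its members has at least `C(n, m) / C(2m, m)` members (count the `2m`-supersets of each
member), so `C(n, m) ≤ C(s, t) · C(tB, m) · C(2m, m)`. The estimates `(n/m)^m ≤ C(n, m)`,
`C(tB, m) ≤ (e·tB/m)^m`, `C(s, t) ≤ s^t` and `C(2m, m) ≤ 4^m` turn this into
`(n / (4e·tB))^m ≤ s^t`; taking `m`-th roots and using `e ≥ 1` gives the claim.
-/

open Finset

namespace Nat

theorem pow_mul_factorial_le_pow_mul_descFactorial {n k : ℕ} (hkn : k ≤ n) :
    n ^ k * k ! ≤ k ^ k * n.descFactorial k := by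
  have hpow (a : ℕ) : a ^ k = ∏ _i ∈ range k, a := by simp
  rw [← descFactorial_self, descFactorial_eq_prod_range, descFactorial_eq_prod_range, hpow n,
    hpow k, ← prod_mul_distrib, ← prod_mul_distrib]
  refine prod_le_prod' fun i hi => ?_
  have hik : i < k := mem_range.1 hi
  zify [hik.le, hik.le.trans hkn]
  nlinarith

theorem div_pow_le_choose {α : Type*} [Semifield α] [LinearOrder α] [IsStrictOrderedRing α]
    {n k : ℕ} (hkn : k ≤ n) : ((n : α) / k) ^ k ≤ n.choose k := by
  have h : n ^ k ≤ n.choose k * k ^ k := by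
    refine Nat.le_of_mul_le_mul_right ?_ k.factorial_pos
    calc n ^ k * k ! ≤ k ^ k * n.descFactorial k := pow_mul_factorial_le_pow_mul_descFactorial hkn
      _ = n.choose k * k ^ k * k ! := by rw [descFactorial_eq_factorial_mul_choose]; ring
  rw [div_pow]
  exact div_le_of_le_mul₀ (by positivity) (by positivity) (by exact_mod_cast h)

theorem choose_le_exp_mul_div_pow (n k : ℕ) :
    (n.choose k : ℝ) ≤ (Real.exp 1 * n / k) ^ k := by
  rcases k.eq_zero_or_pos with rfl | hk
  · simp
  calc (n.choose k : ℝ) ≤ (n : ℝ) ^ k / k ! := choose_le_pow_div k n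
    _ = ((k : ℝ) ^ k / k !) * (n / k) ^ k := by rw [div_pow]; field_simp
    _ ≤ Real.exp k * (n / k) ^ k := by gcongr; exact Real.pow_div_factorial_le_exp _ k.cast_nonneg k
    _ = (Real.exp 1 * n / k) ^ k := by rw [← Real.exp_one_pow, ← mul_pow, mul_div_assoc]

end Nat

section Covering

variable {α : Type*} [DecidableEq α]

theorem choose_card_le_card_mul_choose_sub_of_forall_exists_subset [Fintype α]
    {T : Finset (Finset α)} {j k : ℕ} (hT : ∀ S ∈ T, #S = j)
    (hcov : ∀ Q : Finset α, #Q = k → ∃ S ∈ T, S ⊆ Q) :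
    (Fintype.card α).choose k ≤ #T * (Fintype.card α - j).choose (k - j) := by
  have hsub : (univ : Finset α).powersetCard k ⊆
      T.biUnion fun S => (Sᶜ.powersetCard (k - j)).image (S ∪ ·) := by
    intro Q hQ
    obtain ⟨S, hST, hSQ⟩ := hcov Q (mem_powersetCard.1 hQ).2
    refine mem_biUnion.2 ⟨S, hST, mem_image.2 ⟨Q \ S, mem_powersetCard.2 ⟨?_, ?_⟩,
      union_sdiff_of_subset hSQ⟩⟩
    · exact fun x hx => mem_compl.2 (mem_sdiff.1 hx).2
    · rw [card_sdiff_of_subset hSQ, (mem_powersetCard.1 hQ).2, hT S hST]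
  calc (Fintype.card α).choose k = #((univ : Finset α).powersetCard k) := by
        rw [card_powersetCard, card_univ]
    _ ≤ _ := card_le_card hsub
    _ ≤ #T * (Fintype.card α - j).choose (k - j) := by
        refine card_biUnion_le_card_mul _ _ _ fun S hS => card_image_le.trans ?_
        rw [card_powersetCard, card_compl, hT S hS]

theorem choose_card_le_card_mul_choose_of_forall_exists_subset [Fintype α]
    {T : Finset (Finset α)} {j k : ℕ} (hjk : j ≤ k) (hk : k ≤ Fintype.card α)
    (hT : ∀ S ∈ T, #S = j) (hcov : ∀ Q : Finset α, #Q = k → ∃ S ∈ T, S ⊆ Q) :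
    (Fintype.card α).choose j ≤ #T * k.choose j := by
  set N := Fintype.card α
  refine Nat.le_of_mul_le_mul_right ?_ (Nat.choose_pos (by omega : k - j ≤ N - j))
  calc N.choose j * (N - j).choose (k - j) = N.choose k * k.choose j := (Nat.choose_mul hjk).symm
    _ ≤ #T * (N - j).choose (k - j) * k.choose j :=
        Nat.mul_le_mul_right _ (choose_card_le_card_mul_choose_sub_of_forall_exists_subset hT hcov)
    _ = #T * k.choose j * (N - j).choose (k - j) := by ring

def coveredSets (𝓑 : Finset (Finset α)) (t m : ℕ) : Finset (Finset α) :=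
  (𝓑.powersetCard t).biUnion fun 𝓒 => (𝓒.sup id).powersetCard m

variable {𝓑 : Finset (Finset α)} {t m : ℕ}

theorem card_of_mem_coveredSets {S : Finset α} (hS : S ∈ coveredSets 𝓑 t m) : #S = m := by
  obtain ⟨_, _, hS⟩ := mem_biUnion.1 hS
  exact (mem_powersetCard.1 hS).2

theorem card_coveredSets_le {B : ℕ} (hB : ∀ b ∈ 𝓑, #b ≤ B) :
    #(coveredSets 𝓑 t m) ≤ (#𝓑).choose t * (t * B).choose m := by
  rw [← card_powersetCard t 𝓑]
  refine card_biUnion_le_card_mul _ _ _ fun 𝓒 h𝓒 => ?_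
  obtain ⟨h𝓒𝓑, h𝓒t⟩ := mem_powersetCard.1 h𝓒
  rw [card_powersetCard]
  refine Nat.choose_le_choose _ ?_
  rw [sup_eq_biUnion, ← h𝓒t]
  exact card_biUnion_le_card_mul _ _ _ fun b hb => hB b (h𝓒𝓑 hb)

theorem exists_mem_coveredSets_subset {Q : Finset α} {𝓒 : Finset (Finset α)} (h𝓒𝓑 : 𝓒 ⊆ 𝓑)
    (h𝓒t : #𝓒 ≤ t) (ht𝓑 : t ≤ #𝓑) (hm : m ≤ #(Q ∩ 𝓒.sup id)) :
    ∃ S ∈ coveredSets 𝓑 t m, S ⊆ Q := by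
  obtain ⟨S, hSQ, hS⟩ := exists_subset_card_eq hm
  obtain ⟨𝓒', h𝓒𝓒', h𝓒'𝓑, h𝓒'⟩ := exists_subsuperset_card_eq h𝓒𝓑 h𝓒t ht𝓑
  refine ⟨S, mem_biUnion.2 ⟨𝓒', mem_powersetCard.2 ⟨h𝓒'𝓑, h𝓒'⟩, mem_powersetCard.2 ⟨?_, hS⟩⟩,
    hSQ.trans inter_subset_left⟩
  exact hSQ.trans (inter_subset_right.trans (sup_mono h𝓒𝓒'))

theorem choose_card_le_of_forall_exists_cover [Fintype α] {B k : ℕ} (hB : ∀ b ∈ 𝓑, #b ≤ B)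
    (ht𝓑 : t ≤ #𝓑) (hmk : m ≤ k) (hk : k ≤ Fintype.card α)
    (hcov : ∀ Q : Finset α, #Q = k → ∃ 𝓒 ⊆ 𝓑, #𝓒 ≤ t ∧ m ≤ #(Q ∩ 𝓒.sup id)) :
    (Fintype.card α).choose m ≤ (#𝓑).choose t * (t * B).choose m * k.choose m := by
  calc (Fintype.card α).choose m ≤ #(coveredSets 𝓑 t m) * k.choose m := by
        refine choose_card_le_card_mul_choose_of_forall_exists_subset hmk hk
          (fun S => card_of_mem_coveredSets) fun Q hQ => ?_
        obtain ⟨𝓒, h𝓒𝓑, h𝓒t, hm⟩ := hcov Q hQ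
        exact exists_mem_coveredSets_subset h𝓒𝓑 h𝓒t ht𝓑 hm
    _ ≤ _ := Nat.mul_le_mul_right _ (card_coveredSets_le hB)

end Covering

theorem div_pow_le_pow_of_choose_le {n s t B m : ℕ} (hm : m ≠ 0) (hmn : m ≤ n)
    (h : n.choose m ≤ s.choose t * (t * B).choose m * (2 * m).choose m) :
    ((n : ℝ) / (4 * Real.exp 1 * t * B)) ^ m ≤ (s : ℝ) ^ t := by
  have hupper : (n.choose m : ℝ) ≤ (s : ℝ) ^ t * (4 * Real.exp 1 * t * B / m) ^ m :=
    calc (n.choose m : ℝ) ≤ s.choose t * (t * B).choose m * (2 * m).choose m := by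
          exact_mod_cast h
      _ ≤ (s : ℝ) ^ t * (Real.exp 1 * ((t * B : ℕ) : ℝ) / m) ^ m * 4 ^ m := by
          gcongr
          · exact_mod_cast s.choose_le_pow t
          · exact Nat.choose_le_exp_mul_div_pow _ _
          · rw [← Nat.centralBinom_eq_two_mul_choose]
            exact_mod_cast m.centralBinom_le_four_pow
      _ = (s : ℝ) ^ t * (4 * Real.exp 1 * t * B / m) ^ m := by
          rw [mul_assoc, ← mul_pow]; push_cast; ring
  rw [← div_div_div_cancel_right₀ (Nat.cast_ne_zero.2 hm), div_pow]
  exact div_le_of_le_mul₀ (by positivity) (by positivity)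
    ((Nat.div_pow_le_choose hmn).trans hupper)

theorem Real.le_rpow_div_of_pow_le {x y : ℝ} {m t : ℕ} (hx : 0 ≤ x) (hy : 0 ≤ y) (hm : m ≠ 0)
    (h : x ^ m ≤ y ^ t) : x ≤ y ^ ((t : ℝ) / m) :=
  calc x = (x ^ m) ^ (m⁻¹ : ℝ) := (pow_rpow_inv_natCast hx hm).symm
    _ ≤ (y ^ t) ^ (m⁻¹ : ℝ) := by gcongr
    _ = y ^ ((t : ℝ) / m) := by rw [← rpow_natCast, ← rpow_mul hy, div_eq_mul_inv]

theorem relaxed_set_workload_tradeoff_general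
    (n lam B s t : ℕ) (hlam : 0 < lam) (heven : Even lam)
    (hln : lam ≤ n) (hts : t ≤ s)
    (𝓑 : Finset (Finset (Fin n))) (hcard : 𝓑.card = s)
    (hblocks : ∀ b ∈ 𝓑, b.card ≤ B)
    (hwork : ∀ Q : Finset (Fin n), Q.card = lam →
      ∃ 𝓒 ⊆ 𝓑, 𝓒.card ≤ t ∧ lam ≤ 2 * (Q ∩ 𝓒.sup id).card) :
    (s : ℝ) ^ ((2 * (t : ℝ)) / (lam : ℝ)) ≥
      (n : ℝ) / (4 * Real.exp 1 ^ 2 * (t : ℝ) * (B : ℝ)) := by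
  obtain ⟨m, rfl⟩ := heven
  have hm : m ≠ 0 := by omega
  have hcount : n.choose m ≤ s.choose t * (t * B).choose m * (2 * m).choose m := by
    have := choose_card_le_of_forall_exists_cover hblocks (hcard ▸ hts) (by omega : m ≤ m + m)
      (by simpa using hln) fun Q hQ => by
        obtain ⟨𝓒, h𝓒𝓑, h𝓒t, hcov⟩ := hwork Q hQ
        exact ⟨𝓒, h𝓒𝓑, h𝓒t, by omega⟩
    simpa [hcard, two_mul] using this
  have hexp : 2 * (t : ℝ) / ((m + m : ℕ) : ℝ) = t / m := by
    push_cast; field_simp; ring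
  rw [ge_iff_le, hexp]
  calc (n : ℝ) / (4 * Real.exp 1 ^ 2 * t * B) = n / (4 * Real.exp 1 * t * B) / Real.exp 1 := by
        rw [div_div]; ring_nf
    _ ≤ n / (4 * Real.exp 1 * t * B) := div_le_self (by positivity) (Real.one_le_exp zero_le_one)
    _ ≤ (s : ℝ) ^ ((t : ℝ) / m) := Real.le_rpow_div_of_pow_le (by positivity) (by positivity) hm
        (div_pow_le_pow_of_choose_le hm (by omega) hcount)

/-- space–I/O tradeoff for the relaxed λ-set workload. -/
theorem relaxed_set_workload_tradeoff
    (n lam B s t : ℕ) (hn : 0 < n) (hlam : 0 < lam) (heven : Even lam)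
    (hB : 0 < B) (hs : 0 < s) (ht : 0 < t) (hln : lam ≤ n) (hts : t ≤ s)
    (𝓑 : Finset (Finset (Fin n))) (hcard : 𝓑.card = s)
    (hblocks : ∀ b ∈ 𝓑, b.card ≤ B)
    (hwork : ∀ Q : Finset (Fin n), Q.card = lam →
      ∃ 𝓒 ⊆ 𝓑, 𝓒.card ≤ t ∧ lam ≤ 2 * (Q ∩ 𝓒.sup id).card) :
    (s : ℝ) ^ ((2 * (t : ℝ)) / (lam : ℝ)) ≥
      (n : ℝ) / (4 * Real.exp 1 ^ 2 * (t : ℝ) * (B : ℝ)) :=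
  relaxed_set_workload_tradeoff_general n lam B s t hlam heven hln hts 𝓑 hcard hblocks hwork
end

section
/- Let n, λ, B, s, t be positive integers with λ even, λ ≤ n, and t ≤ s, and let α be a real number with 1 ≤ α ≤ B and t ≤ λ/α. Let 𝓑 be a family of exactly s subsets of {1,…,n}, each of cardinality at most B. Suppose that for every Q ⊆ {1,…,n} with |Q| = λ there exists a subfamily 𝓒 ⊆ 𝓑 with |𝓒| ≤ t such that 2·|Q ∩ ⋃𝓒| ≥ λ. Then, as real numbers, s ≥ ((1/(2e))·√(n·α/(λ·B)))^α, where e = exp(1). -/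
/-!
Write `λ = 2m`. Every `λ`-set `Q` is `S ∪ R` where `S` is an `m`-subset of the union of some `t`
blocks (a set of at most `tB` points) and `R` is an arbitrary `m`-set, so
`C(n, 2m) ≤ C(s, t) C(tB, m) C(n, m)`. Dividing by `C(n, m)` through
`C(n, 2m) C(2m, m) = C(n, m) C(n - m, m)` and using `(N/m)^m ≤ C(N, m)`, `C(K, m) ≤ K^m/m!`,
`m^m ≤ e^m m!` and `n ≤ 2(n - m)` gives `n^m ≤ s^t (8etB)^m`. Since `tα ≤ λ`, the quantity
`x = √(nα/(λB))/(2e)` satisfies `x² · 8etB ≤ n`, hence `x^λ ≤ s^t`, and `x^α ≤ s` follows by taking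
`t`-th roots.
-/

open Finset Real
open scoped Nat

namespace Nat

theorem pow_le_pow_mul_choose {N m : ℕ} (h : m ≤ N) : N ^ m ≤ m ^ m * N.choose m := by
  -- termwise, `N * (m - i) ≤ (N - i) * m`
  have hprod : N ^ m * m.descFactorial m ≤ N.descFactorial m * m ^ m := by
    rw [descFactorial_eq_prod_range, descFactorial_eq_prod_range, ← card_range m, ← prod_const,
      ← prod_const, card_range, ← prod_mul_distrib, ← prod_mul_distrib]
    refine prod_le_prod' fun i _ => ?_
    rw [Nat.mul_sub, Nat.sub_mul]
    have : i * m ≤ N * i := by rw [Nat.mul_comm N]; exact Nat.mul_le_mul_left i h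
    omega
  rw [descFactorial_self, descFactorial_eq_factorial_mul_choose] at hprod
  refine Nat.le_of_mul_le_mul_right ?_ (factorial_pos m)
  linarith

end Nat

theorem pow_le_of_choose_le_mul_choose {N K m c : ℕ} (hmN : m ≤ N)
    (h : N.choose m ≤ c * K.choose m) : (N : ℝ) ^ m ≤ c * (exp 1 * K) ^ m := by
  have hfac : (0 : ℝ) < m ! := mod_cast m.factorial_pos
  have hm : (m : ℝ) ^ m ≤ exp 1 ^ m * m ! := by
    rw [← div_le_iff₀ hfac, exp_one_pow]
    exact pow_div_factorial_le_exp _ m.cast_nonneg m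
  have hK : (c * K.choose m : ℝ) ≤ c * (K ^ m / m !) :=
    mul_le_mul_of_nonneg_left (Nat.choose_le_pow_div m K) c.cast_nonneg
  calc (N : ℝ) ^ m ≤ m ^ m * N.choose m := mod_cast Nat.pow_le_pow_mul_choose hmN
    _ ≤ (exp 1 ^ m * m !) * (c * (K ^ m / m !)) :=
        mul_le_mul hm ((Nat.cast_le.2 h).trans (by push_cast; exact hK)) (by positivity)
          (by positivity)
    _ = c * (exp 1 * K) ^ m := by field_simp; ring

theorem Real.rpow_le_of_pow_le_pow {x y a : ℝ} {k t : ℕ} (hx : 0 ≤ x) (hy : 1 ≤ y) (ha : 0 ≤ a)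
    (ht : 0 < t) (hak : a * t ≤ k) (h : x ^ k ≤ y ^ t) : x ^ a ≤ y := by
  rcases le_or_gt x 1 with hx1 | hx1
  · exact (rpow_le_one hx hx1 ha).trans hy
  have ht' : (0 : ℝ) < t := mod_cast ht
  calc x ^ a ≤ x ^ (k * (t⁻¹ : ℝ)) :=
        rpow_le_rpow_of_exponent_le hx1.le (by rwa [← div_eq_mul_inv, le_div_iff₀ ht'])
    _ = (x ^ k) ^ (t⁻¹ : ℝ) := rpow_natCast_mul hx k _
    _ ≤ (y ^ t) ^ (t⁻¹ : ℝ) := rpow_le_rpow (by positivity) h (by positivity)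
    _ = y := pow_rpow_inv_natCast (by linarith) ht.ne'

section Cover

variable {α : Type*} [DecidableEq α]

theorem Finset.card_sup_id_le {B : ℕ} {𝓒 : Finset (Finset α)} (h : ∀ b ∈ 𝓒, #b ≤ B) :
    #(𝓒.sup id) ≤ #𝓒 * B := by
  rw [sup_eq_biUnion]
  exact card_biUnion_le_card_mul _ _ _ h

variable [Fintype α] {𝓑 𝓒 : Finset (Finset α)} {Q : Finset α} {m k t : ℕ}

theorem exists_union_eq_of_cover (ht : t ≤ #𝓑) (hQ : #Q = m + k) (h𝓒 : 𝓒 ⊆ 𝓑) (h𝓒t : #𝓒 ≤ t)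
    (hm : m ≤ #(Q ∩ 𝓒.sup id)) :
    ∃ 𝓓 ∈ 𝓑.powersetCard t, ∃ S ∈ (𝓓.sup id).powersetCard m,
      ∃ R ∈ (univ : Finset α).powersetCard k, S ∪ R = Q := by
  obtain ⟨𝓓, h𝓒𝓓, h𝓓, h𝓓t⟩ := exists_subsuperset_card_eq h𝓒 h𝓒t ht
  have hm' : m ≤ #(Q ∩ 𝓓.sup id) :=
    hm.trans (card_le_card (inter_subset_inter_left (sup_mono h𝓒𝓓)))
  obtain ⟨S, hS, hSm⟩ := exists_subset_card_eq hm'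
  have hSQ : S ⊆ Q := hS.trans inter_subset_left
  refine ⟨𝓓, mem_powersetCard.2 ⟨h𝓓, h𝓓t⟩, S,
    mem_powersetCard.2 ⟨hS.trans inter_subset_right, hSm⟩, Q \ S,
    mem_powersetCard.2 ⟨subset_univ _, ?_⟩, union_sdiff_of_subset hSQ⟩
  rw [card_sdiff_of_subset hSQ]
  omega

theorem choose_card_le_of_cover {B : ℕ} (hB : ∀ b ∈ 𝓑, #b ≤ B) (ht : t ≤ #𝓑)
    (hcover : ∀ Q : Finset α, #Q = m + k → ∃ 𝓒 ⊆ 𝓑, #𝓒 ≤ t ∧ m ≤ #(Q ∩ 𝓒.sup id)) :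
    (Fintype.card α).choose (m + k) ≤
      (#𝓑).choose t * ((t * B).choose m * (Fintype.card α).choose k) := by
  set pieces : Finset (Finset α) := (𝓑.powersetCard t).biUnion fun 𝓓 =>
    ((𝓓.sup id).powersetCard m ×ˢ (univ : Finset α).powersetCard k).image fun p => p.1 ∪ p.2
  have hsub : (univ : Finset α).powersetCard (m + k) ⊆ pieces := by
    intro Q hQ
    obtain ⟨𝓒, h𝓒, h𝓒t, hm⟩ := hcover Q (mem_powersetCard.1 hQ).2
    obtain ⟨𝓓, h𝓓, S, hS, R, hR, rfl⟩ :=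
      exists_union_eq_of_cover ht (mem_powersetCard.1 hQ).2 h𝓒 h𝓒t hm
    exact mem_biUnion.2 ⟨𝓓, h𝓓, mem_image.2 ⟨(S, R), mem_product.2 ⟨hS, hR⟩, rfl⟩⟩
  have hpiece : ∀ 𝓓 ∈ 𝓑.powersetCard t,
      #(((𝓓.sup id).powersetCard m ×ˢ (univ : Finset α).powersetCard k).image
        fun p => p.1 ∪ p.2) ≤ (t * B).choose m * (Fintype.card α).choose k := by
    intro 𝓓 h𝓓
    obtain ⟨h𝓓𝓑, h𝓓t⟩ := mem_powersetCard.1 h𝓓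
    refine card_image_le.trans ?_
    rw [card_product, card_powersetCard, card_powersetCard, card_univ]
    refine Nat.mul_le_mul_right _ (Nat.choose_le_choose m ?_)
    exact h𝓓t ▸ card_sup_id_le fun b hb => hB b (h𝓓𝓑 hb)
  calc (Fintype.card α).choose (m + k) = #((univ : Finset α).powersetCard (m + k)) := by
        rw [card_powersetCard, card_univ]
    _ ≤ #pieces := card_le_card hsub
    _ ≤ #(𝓑.powersetCard t) * ((t * B).choose m * (Fintype.card α).choose k) :=
        card_biUnion_le_card_mul _ _ _ hpiece
    _ = _ := by rw [card_powersetCard]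

theorem choose_sub_le_of_cover {B : ℕ} (hB : ∀ b ∈ 𝓑, #b ≤ B) (ht : t ≤ #𝓑)
    (hk : k ≤ Fintype.card α)
    (hcover : ∀ Q : Finset α, #Q = m + k → ∃ 𝓒 ⊆ 𝓑, #𝓒 ≤ t ∧ m ≤ #(Q ∩ 𝓒.sup id)) :
    (Fintype.card α - k).choose m ≤ (#𝓑).choose t * (m + k).choose k * (t * B).choose m := by
  have hpos : 0 < (Fintype.card α).choose k := Nat.choose_pos hk
  -- `C(n, m + k) C(m + k, k) = C(n, k) C(n - k, m)`
  have hid := Nat.choose_mul (n := Fintype.card α) (Nat.le_add_left k m)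
  rw [Nat.add_sub_cancel] at hid
  refine Nat.le_of_mul_le_mul_left ?_ hpos
  calc (Fintype.card α).choose k * (Fintype.card α - k).choose m
        = (Fintype.card α).choose (m + k) * (m + k).choose k := hid.symm
    _ ≤ (#𝓑).choose t * ((t * B).choose m * (Fintype.card α).choose k) * (m + k).choose k :=
        Nat.mul_le_mul_right _ (choose_card_le_of_cover hB ht hcover)
    _ = _ := by ring

theorem card_pow_le_of_cover {B : ℕ} (hB : ∀ b ∈ 𝓑, #b ≤ B) (ht : t ≤ #𝓑)
    (hm : m + m ≤ Fintype.card α)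
    (hcover : ∀ Q : Finset α, #Q = m + m → ∃ 𝓒 ⊆ 𝓑, #𝓒 ≤ t ∧ m ≤ #(Q ∩ 𝓒.sup id)) :
    (Fintype.card α : ℝ) ^ m ≤ (#𝓑 : ℝ) ^ t * (8 * exp 1 * (t * B)) ^ m := by
  set n := Fintype.card α
  have hc : (#𝓑).choose t * (m + m).choose m ≤ #𝓑 ^ t * 4 ^ m := by
    refine Nat.mul_le_mul (Nat.choose_le_pow _ t) ?_
    rw [← two_mul, ← Nat.centralBinom_eq_two_mul_choose]
    exact Nat.centralBinom_le_four_pow m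
  have hn : (n : ℝ) ≤ 2 * (n - m : ℕ) := by
    have : ((m + m : ℕ) : ℝ) ≤ n := mod_cast hm
    push_cast [Nat.cast_sub (show m ≤ n by omega)] at this ⊢
    linarith
  calc (n : ℝ) ^ m ≤ (2 * (n - m : ℕ)) ^ m := pow_le_pow_left₀ n.cast_nonneg hn m
    _ = 2 ^ m * ((n - m : ℕ) : ℝ) ^ m := mul_pow _ _ _
    _ ≤ 2 ^ m * (((#𝓑).choose t * (m + m).choose m : ℕ) * (exp 1 * (t * B : ℕ)) ^ m) := by
        gcongr
        exact pow_le_of_choose_le_mul_choose (by omega)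
          (choose_sub_le_of_cover hB ht (by omega) hcover)
    _ ≤ 2 ^ m * ((#𝓑 ^ t * 4 ^ m : ℕ) * (exp 1 * (t * B : ℕ)) ^ m) := by gcongr
    _ = (#𝓑 : ℝ) ^ t * (8 * exp 1 * (t * B)) ^ m := by
        rw [show 8 * exp 1 * (t * B) = 2 * (4 * (exp 1 * (t * B))) by ring, mul_pow, mul_pow]
        push_cast
        ring

end Cover

theorem sq_inv_two_exp_mul_sqrt_mul_le {n lam B t : ℕ} {α : ℝ} (hlam : 0 < lam) (hB : 0 < B)
    (hα : 0 ≤ α) (htα : α * t ≤ lam) :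
    ((1 / (2 * exp 1)) * √(n * α / (lam * B))) ^ 2 * (8 * exp 1 * (t * B)) ≤ n := by
  have he : 2 ≤ exp 1 := by linarith [add_one_le_exp (1 : ℝ)]
  have hlam' : (0 : ℝ) < lam := mod_cast hlam
  have hB' : (0 : ℝ) < B := mod_cast hB
  rw [mul_pow, sq_sqrt (by positivity)]
  have key : (n : ℝ) * (α * t) * 2 ≤ n * lam * exp 1 := by
    have := mul_le_mul htα he (by norm_num) hlam'.le
    nlinarith [(n.cast_nonneg : (0 : ℝ) ≤ n)]
  field_simp
  nlinarith [key]

theorem relaxed_set_workload_space_lower_bound_general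
    (n lam B s t : ℕ) (α : ℝ) (hlam : 0 < lam) (heven : Even lam)
    (hB : 0 < B) (hs : 0 < s) (ht : 0 < t) (hln : lam ≤ n) (hts : t ≤ s)
    (hα1 : 1 ≤ α) (htα : (t : ℝ) ≤ (lam : ℝ) / α)
    (𝓑 : Finset (Finset (Fin n))) (hcard : 𝓑.card = s)
    (hblocks : ∀ b ∈ 𝓑, b.card ≤ B)
    (hwork : ∀ Q : Finset (Fin n), Q.card = lam →
      ∃ 𝓒 ⊆ 𝓑, 𝓒.card ≤ t ∧ lam ≤ 2 * (Q ∩ 𝓒.sup id).card) :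
    (s : ℝ) ≥
      ((1 / (2 * Real.exp 1)) *
        Real.sqrt ((n : ℝ) * α / ((lam : ℝ) * (B : ℝ)))) ^ α := by
  have htα' : α * t ≤ lam := by rwa [le_div_iff₀ (by linarith), mul_comm] at htα
  have hx := sq_inv_two_exp_mul_sqrt_mul_le (n := n) hlam hB (by linarith) htα'
  have hx0 : 0 ≤ (1 / (2 * exp 1)) * √(n * α / (lam * B)) := by positivity
  generalize (1 / (2 * exp 1)) * √(n * α / (lam * B)) = x at hx hx0 ⊢
  obtain ⟨m, rfl⟩ := heven
  have hcount := card_pow_le_of_cover hblocks (hcard ▸ hts) (by simpa using hln)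
    fun Q hQ => (hwork Q hQ).imp fun 𝓒 ⟨h𝓒, h𝓒t, hm⟩ => ⟨h𝓒, h𝓒t, by omega⟩
  rw [Fintype.card_fin, hcard] at hcount
  have hD : (0 : ℝ) < 8 * exp 1 * (t * B) := by positivity
  have hpow : x ^ (m + m) ≤ (s : ℝ) ^ t := by
    refine le_of_mul_le_mul_right ?_ (pow_pos hD m)
    calc x ^ (m + m) * (8 * exp 1 * (t * B)) ^ m = (x ^ 2 * (8 * exp 1 * (t * B))) ^ m := by
          ring
      _ ≤ (n : ℝ) ^ m := pow_le_pow_left₀ (by positivity) hx m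
      _ ≤ (s : ℝ) ^ t * (8 * exp 1 * (t * B)) ^ m := hcount
  exact rpow_le_of_pow_le_pow hx0 (mod_cast hs) (by linarith) ht htα' hpow

/-- space lower bound for the relaxed λ-set workload with
query time `t ≤ λ/α`. -/
theorem relaxed_set_workload_space_lower_bound
    (n lam B s t : ℕ) (α : ℝ) (hn : 0 < n) (hlam : 0 < lam) (heven : Even lam)
    (hB : 0 < B) (hs : 0 < s) (ht : 0 < t) (hln : lam ≤ n) (hts : t ≤ s)
    (hα1 : 1 ≤ α) (hαB : α ≤ (B : ℝ)) (htα : (t : ℝ) ≤ (lam : ℝ) / α)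
    (𝓑 : Finset (Finset (Fin n))) (hcard : 𝓑.card = s)
    (hblocks : ∀ b ∈ 𝓑, b.card ≤ B)
    (hwork : ∀ Q : Finset (Fin n), Q.card = lam →
      ∃ 𝓒 ⊆ 𝓑, 𝓒.card ≤ t ∧ lam ≤ 2 * (Q ∩ 𝓒.sup id).card) :
    (s : ℝ) ≥
      ((1 / (2 * Real.exp 1)) *
        Real.sqrt ((n : ℝ) * α / ((lam : ℝ) * (B : ℝ)))) ^ α :=
  relaxed_set_workload_space_lower_bound_general n lam B s t α hlam heven hB hs ht hln hts hα1 htα 𝓑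
    hcard hblocks hwork
end

section
/- Let n, λ, B, s, t be positive integers with λ ≤ n and t ≤ s. Let 𝓑 be a family of exactly s subsets of {1,…,n}, each of cardinality at most B. Suppose that for every Q ⊆ {1,…,n} with |Q| = λ there exists a subfamily 𝓒 ⊆ 𝓑 with |𝓒| ≤ t such that Q ⊆ ⋃𝓒. Then C(n,λ) ≤ C(s,t) · C(t·B, λ), where C(·,·) denotes the binomial coefficient. -/
/-!
Every `λ`-set is a `λ`-subset of the union of some `t` blocks (pad the covering subfamily up to
exactly `t` blocks). There are `C(s, t)` such `t`-subfamilies, each union has at most `t * B`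
points and hence at most `C(t * B, λ)` subsets of size `λ`; a union bound finishes.
-/

open Finset

namespace Finset

variable {α : Type*} [DecidableEq α]

theorem card_sup_id_le_card_mul {𝓒 : Finset (Finset α)} {B : ℕ} (h𝓒 : ∀ b ∈ 𝓒, #b ≤ B) :
    #(𝓒.sup id) ≤ #𝓒 * B := by
  rw [sup_eq_biUnion]
  exact card_biUnion_le_card_mul 𝓒 id B h𝓒

theorem exists_mem_powersetCard_subset_sup_id {𝓑 𝓒 : Finset (Finset α)} {Q : Finset α} {t : ℕ}
    (h𝓒𝓑 : 𝓒 ⊆ 𝓑) (h𝓒t : #𝓒 ≤ t) (ht𝓑 : t ≤ #𝓑) (hQ : Q ⊆ 𝓒.sup id) :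
    ∃ 𝓒' ∈ 𝓑.powersetCard t, Q ⊆ 𝓒'.sup id := by
  obtain ⟨𝓒', h𝓒𝓒', h𝓒'𝓑, h𝓒'⟩ := exists_subsuperset_card_eq h𝓒𝓑 h𝓒t ht𝓑
  exact ⟨𝓒', mem_powersetCard.mpr ⟨h𝓒'𝓑, h𝓒'⟩, hQ.trans (sup_mono h𝓒𝓒')⟩

theorem card_le_choose_mul_choose_of_forall_subset_sup_id {𝓑 S : Finset (Finset α)}
    {lam B t : ℕ} (ht𝓑 : t ≤ #𝓑) (hblocks : ∀ b ∈ 𝓑, #b ≤ B)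
    (hS : ∀ Q ∈ S, #Q = lam ∧ ∃ 𝓒 ⊆ 𝓑, #𝓒 ≤ t ∧ Q ⊆ 𝓒.sup id) :
    #S ≤ (#𝓑).choose t * (t * B).choose lam := by
  have hcover : S ⊆ (𝓑.powersetCard t).biUnion fun 𝓒 ↦ (𝓒.sup id).powersetCard lam := by
    intro Q hQ
    obtain ⟨hQlam, 𝓒, h𝓒𝓑, h𝓒t, hQ𝓒⟩ := hS Q hQ
    obtain ⟨𝓒', h𝓒', hQ𝓒'⟩ := exists_mem_powersetCard_subset_sup_id h𝓒𝓑 h𝓒t ht𝓑 hQ𝓒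
    exact mem_biUnion.mpr ⟨𝓒', h𝓒', mem_powersetCard.mpr ⟨hQ𝓒', hQlam⟩⟩
  have hunion : ∀ 𝓒 ∈ 𝓑.powersetCard t, #((𝓒.sup id).powersetCard lam) ≤ (t * B).choose lam := by
    intro 𝓒 h𝓒
    obtain ⟨h𝓒𝓑, rfl⟩ := mem_powersetCard.mp h𝓒
    rw [card_powersetCard]
    exact Nat.choose_le_choose _ (card_sup_id_le_card_mul fun b hb ↦ hblocks b (h𝓒𝓑 hb))
  calc #S ≤ #((𝓑.powersetCard t).biUnion fun 𝓒 ↦ (𝓒.sup id).powersetCard lam) :=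
        card_le_card hcover
    _ ≤ #(𝓑.powersetCard t) * (t * B).choose lam := card_biUnion_le_card_mul _ _ _ hunion
    _ = (#𝓑).choose t * (t * B).choose lam := by rw [card_powersetCard]

end Finset

theorem exact_set_workload_counting_general
    (n lam B s t : ℕ) (hts : t ≤ s)
    (𝓑 : Finset (Finset (Fin n))) (hcard : 𝓑.card = s)
    (hblocks : ∀ b ∈ 𝓑, b.card ≤ B)
    (hwork : ∀ Q : Finset (Fin n), Q.card = lam →
      ∃ 𝓒 ⊆ 𝓑, 𝓒.card ≤ t ∧ Q ⊆ 𝓒.sup id) :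
    Nat.choose n lam ≤ Nat.choose s t * Nat.choose (t * B) lam := by
  subst hcard
  have hS : ∀ Q ∈ (univ : Finset (Fin n)).powersetCard lam,
      #Q = lam ∧ ∃ 𝓒 ⊆ 𝓑, #𝓒 ≤ t ∧ Q ⊆ 𝓒.sup id := fun Q hQ ↦
    have hQlam := (mem_powersetCard.mp hQ).2
    ⟨hQlam, hwork Q hQlam⟩
  simpa using card_le_choose_mul_choose_of_forall_subset_sup_id hts hblocks hS

/-- counting inequality for the exact λ-set workload. -/
theorem exact_set_workload_counting
    (n lam B s t : ℕ) (hn : 0 < n) (hlam : 0 < lam) (hB : 0 < B)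
    (hs : 0 < s) (ht : 0 < t) (hln : lam ≤ n) (hts : t ≤ s)
    (𝓑 : Finset (Finset (Fin n))) (hcard : 𝓑.card = s)
    (hblocks : ∀ b ∈ 𝓑, b.card ≤ B)
    (hwork : ∀ Q : Finset (Fin n), Q.card = lam →
      ∃ 𝓒 ⊆ 𝓑, 𝓒.card ≤ t ∧ Q ⊆ 𝓒.sup id) :
    Nat.choose n lam ≤ Nat.choose s t * Nat.choose (t * B) lam :=
  exact_set_workload_counting_general n lam B s t hts 𝓑 hcard hblocks hwork
end

section
/- Let n, λ, B, s, t be positive integers with λ ≤ n and t ≤ s, and let α be a real number with 1 ≤ α ≤ B and t ≤ λ/α. Let 𝓑 be a family of exactly s subsets of {1,…,n}, each of cardinality at most B. Suppose that for every Q ⊆ {1,…,n} with |Q| = λ there exists a subfamily 𝓒 ⊆ 𝓑 with |𝓒| ≤ t such that Q ⊆ ⋃𝓒. Then, as real numbers, s ≥ (n·α/(e·λ·B))^α, where e = exp(1). -/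
/-!
Every `λ`-subset of `{1,…,n}` lies in the union of `t` of the `s` blocks, a set of at most `tB`
points, so `C(n, λ) ≤ C(s, t) C(tB, λ)`. As `C(n, λ) / C(m, λ) ≥ (n / m)^λ` for `m ≤ n` and
`C(s, t) ≤ (e s / t)^t`, this gives `(n / (tB))^λ ≤ (e s / t)^t`; taking `t`-th roots and using
`α ≤ λ / t` yields `(n / (tB))^α ≤ e s / t`. It remains to note `n α / (λ B) ≤ n / (tB)` and
`e ≤ e^α`. When `n ≤ tB` the base of the bound is below `1` and there is nothing to prove.
-/

open Finset

namespace Nat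

theorem descFactorial_mul_pow_le_of_le {m n : ℕ} (h : m ≤ n) (k : ℕ) :
    m.descFactorial k * n ^ k ≤ n.descFactorial k * m ^ k := by
  induction k with
  | zero => simp
  | succ k ih =>
    have hstep : (m - k) * n ≤ (n - k) * m := by
      rw [Nat.sub_mul, Nat.sub_mul, Nat.mul_comm m n]
      exact Nat.sub_le_sub_left (Nat.mul_le_mul_left k h) _
    calc m.descFactorial (k + 1) * n ^ (k + 1)
        = ((m - k) * n) * (m.descFactorial k * n ^ k) := by
          rw [descFactorial_succ, pow_succ]; ring
      _ ≤ ((n - k) * m) * (n.descFactorial k * m ^ k) := Nat.mul_le_mul hstep ih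
      _ = n.descFactorial (k + 1) * m ^ (k + 1) := by
          rw [descFactorial_succ, pow_succ]; ring

theorem choose_mul_pow_le_of_le {m n : ℕ} (h : m ≤ n) (k : ℕ) :
    m.choose k * n ^ k ≤ n.choose k * m ^ k := by
  have := descFactorial_mul_pow_le_of_le h k
  rw [descFactorial_eq_factorial_mul_choose, descFactorial_eq_factorial_mul_choose,
    Nat.mul_assoc, Nat.mul_assoc] at this
  exact Nat.le_of_mul_le_mul_left this (factorial_pos k)

theorem choose_le_exp_one_mul_div_pow (s t : ℕ) :
    (s.choose t : ℝ) ≤ (Real.exp 1 * s / t) ^ t := by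
  rcases t.eq_zero_or_pos with rfl | ht
  · simp
  have hfact : ((t : ℝ) / Real.exp 1) ^ t ≤ t ! := by
    have := Real.pow_div_factorial_le_exp (t : ℝ) (Nat.cast_nonneg t) t
    rw [div_le_iff₀ (by positivity), ← Real.exp_one_pow] at this
    rw [div_pow, div_le_iff₀ (by positivity)]
    linarith
  calc (s.choose t : ℝ) ≤ (s : ℝ) ^ t / t ! := choose_le_pow_div t s
    _ ≤ (s : ℝ) ^ t / ((t : ℝ) / Real.exp 1) ^ t := by gcongr
    _ = (Real.exp 1 * s / t) ^ t := by rw [← div_pow]; congr 1; field_simp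

end Nat

theorem Real.rpow_le_of_pow_le_pow_s4 {x z α : ℝ} {l t : ℕ} (hx : 1 ≤ x) (hz : 0 ≤ z)
    (ht : 0 < t) (hαt : α * t ≤ l) (h : x ^ l ≤ z ^ t) : x ^ α ≤ z :=
  calc x ^ α ≤ x ^ ((l : ℝ) / t) :=
        rpow_le_rpow_of_exponent_le hx ((le_div_iff₀ (by positivity)).mpr hαt)
    _ = (x ^ l) ^ ((t : ℝ)⁻¹) := by
        rw [div_eq_mul_inv, rpow_mul (by linarith), rpow_natCast]
    _ ≤ (z ^ t) ^ ((t : ℝ)⁻¹) := by gcongr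
    _ = z := pow_rpow_inv_natCast hz ht.ne'

theorem Finset.card_sup_id_le_card_mul_s4 {V : Type*} [DecidableEq V] {𝓒 : Finset (Finset V)}
    {B : ℕ} (h : ∀ b ∈ 𝓒, b.card ≤ B) : (𝓒.sup id).card ≤ 𝓒.card * B := by
  rw [sup_eq_biUnion]
  exact card_biUnion_le_card_mul _ _ _ h

section SetWorkload

variable {V : Type*} [Fintype V] [DecidableEq V]

def AnswersSetWorkload (𝓑 : Finset (Finset V)) (lam t : ℕ) : Prop :=
  ∀ Q : Finset V, Q.card = lam → ∃ 𝓒 ⊆ 𝓑, 𝓒.card ≤ t ∧ Q ⊆ 𝓒.sup id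

variable {𝓑 : Finset (Finset V)} {lam B t : ℕ}

theorem AnswersSetWorkload.le_mul (h : AnswersSetWorkload 𝓑 lam t)
    (hblocks : ∀ b ∈ 𝓑, b.card ≤ B) (hlam : lam ≤ Fintype.card V) : lam ≤ t * B := by
  obtain ⟨Q, -, hQ⟩ := exists_subset_card_eq (s := (univ : Finset V)) (by simpa using hlam)
  obtain ⟨𝓒, h𝓒𝓑, h𝓒t, hQ𝓒⟩ := h Q hQ
  calc lam = Q.card := hQ.symm
    _ ≤ (𝓒.sup id).card := card_le_card hQ𝓒
    _ ≤ 𝓒.card * B := card_sup_id_le_card_mul_s4 fun b hb ↦ hblocks b (h𝓒𝓑 hb)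
    _ ≤ t * B := Nat.mul_le_mul_right _ h𝓒t

theorem AnswersSetWorkload.choose_le (h : AnswersSetWorkload 𝓑 lam t)
    (hblocks : ∀ b ∈ 𝓑, b.card ≤ B) (ht : t ≤ 𝓑.card) :
    (Fintype.card V).choose lam ≤ 𝓑.card.choose t * (t * B).choose lam := by
  have hcover : (univ : Finset V).powersetCard lam ⊆
      (𝓑.powersetCard t).biUnion fun 𝓒 ↦ (𝓒.sup id).powersetCard lam := by
    intro Q hQ
    obtain ⟨𝓒, h𝓒𝓑, h𝓒t, hQ𝓒⟩ := h Q (mem_powersetCard_univ.mp hQ)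
    obtain ⟨𝓒', h𝓒𝓒', h𝓒'𝓑, h𝓒'⟩ := exists_subsuperset_card_eq h𝓒𝓑 h𝓒t ht
    exact mem_biUnion.mpr ⟨𝓒', mem_powersetCard.mpr ⟨h𝓒'𝓑, h𝓒'⟩,
      mem_powersetCard.mpr ⟨hQ𝓒.trans (sup_mono h𝓒𝓒'), mem_powersetCard_univ.mp hQ⟩⟩
  have hunion :
      ∀ 𝓒 ∈ 𝓑.powersetCard t, ((𝓒.sup id).powersetCard lam).card ≤ (t * B).choose lam := by
    intro 𝓒 h𝓒
    obtain ⟨h𝓒𝓑, rfl⟩ := mem_powersetCard.mp h𝓒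
    rw [card_powersetCard]
    exact Nat.choose_le_choose _ (card_sup_id_le_card_mul_s4 fun b hb ↦ hblocks b (h𝓒𝓑 hb))
  calc (Fintype.card V).choose lam = ((univ : Finset V).powersetCard lam).card := by
        rw [card_powersetCard, card_univ]
    _ ≤ _ := card_le_card hcover
    _ ≤ (𝓑.powersetCard t).card * (t * B).choose lam := card_biUnion_le_card_mul _ _ _ hunion
    _ = 𝓑.card.choose t * (t * B).choose lam := by rw [card_powersetCard]

theorem AnswersSetWorkload.div_pow_le (h : AnswersSetWorkload 𝓑 lam t)
    (hblocks : ∀ b ∈ 𝓑, b.card ≤ B) (ht : t ≤ 𝓑.card) (hlam : lam ≤ Fintype.card V)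
    (htB : t * B ≤ Fintype.card V) :
    ((Fintype.card V : ℝ) / (t * B)) ^ lam ≤ (Real.exp 1 * 𝓑.card / t) ^ t := by
  set n := Fintype.card V
  have hpos : 0 < (t * B).choose lam := Nat.choose_pos (h.le_mul hblocks hlam)
  have hnat : n ^ lam ≤ 𝓑.card.choose t * (t * B) ^ lam := by
    refine Nat.le_of_mul_le_mul_left ?_ hpos
    calc (t * B).choose lam * n ^ lam ≤ n.choose lam * (t * B) ^ lam :=
          Nat.choose_mul_pow_le_of_le htB lam
      _ ≤ 𝓑.card.choose t * (t * B).choose lam * (t * B) ^ lam :=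
          Nat.mul_le_mul_right _ (h.choose_le hblocks ht)
      _ = (t * B).choose lam * (𝓑.card.choose t * (t * B) ^ lam) := by ring
  calc ((n : ℝ) / (t * B)) ^ lam ≤ 𝓑.card.choose t := by
        rw [div_pow]
        exact div_le_of_le_mul₀ (by positivity) (by positivity) (by exact_mod_cast hnat)
    _ ≤ (Real.exp 1 * 𝓑.card / t) ^ t := Nat.choose_le_exp_one_mul_div_pow _ _

end SetWorkload

theorem exact_set_workload_space_lower_bound_general
    (n lam B s t : ℕ) (α : ℝ) (hlam : 0 < lam) (hB : 0 < B)
    (hs : 0 < s) (ht : 0 < t) (hln : lam ≤ n) (hts : t ≤ s)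
    (hα1 : 1 ≤ α) (htα : (t : ℝ) ≤ (lam : ℝ) / α)
    (𝓑 : Finset (Finset (Fin n))) (hcard : 𝓑.card = s)
    (hblocks : ∀ b ∈ 𝓑, b.card ≤ B)
    (hwork : ∀ Q : Finset (Fin n), Q.card = lam →
      ∃ 𝓒 ⊆ 𝓑, 𝓒.card ≤ t ∧ Q ⊆ 𝓒.sup id) :
    (s : ℝ) ≥
      ((n : ℝ) * α / (Real.exp 1 * (lam : ℝ) * (B : ℝ))) ^ α := by
  have hα0 : 0 < α := by linarith
  have hαt : α * t ≤ lam := by rw [mul_comm]; exact (le_div_iff₀ hα0).mp htα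
  have htB : (0 : ℝ) < t * B := by positivity
  set x : ℝ := n / (t * B)
  have hbase : (n : ℝ) * α / (Real.exp 1 * lam * B) ≤ x / Real.exp 1 := by
    rw [div_div, div_le_div_iff₀ (by positivity) (by positivity)]
    have := mul_le_mul_of_nonneg_left (mul_le_mul_of_nonneg_right hαt (Nat.cast_nonneg B))
      (by positivity : (0 : ℝ) ≤ n * Real.exp 1)
    linarith
  rw [ge_iff_le]
  rcases le_or_gt x 1 with hx | hx
  · calc _ ≤ (1 : ℝ) := by
          refine Real.rpow_le_one (by positivity) (hbase.trans ?_) hα0.le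
          exact div_le_one_of_le₀ (hx.trans (by simp)) (Real.exp_pos 1).le
      _ ≤ s := Nat.one_le_cast.mpr hs
  have htBn : t * B ≤ Fintype.card (Fin n) := by
    simpa using (mod_cast ((one_lt_div htB).mp hx).le : t * B ≤ n)
  have hpow := AnswersSetWorkload.div_pow_le hwork hblocks (hcard ▸ hts)
    (by simpa using hln) htBn
  rw [Fintype.card_fin, hcard] at hpow
  have hxα : x ^ α ≤ Real.exp 1 * s / t :=
    Real.rpow_le_of_pow_le_pow_s4 hx.le (by positivity) ht hαt hpow
  have he : Real.exp 1 ≤ Real.exp 1 ^ α := by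
    simpa using Real.rpow_le_rpow_of_exponent_le (Real.one_le_exp zero_le_one) hα1
  calc _ ≤ (x / Real.exp 1) ^ α := by gcongr
    _ = x ^ α / Real.exp 1 ^ α := Real.div_rpow (by positivity) (by positivity) α
    _ ≤ (Real.exp 1 * s / t) / Real.exp 1 := by gcongr
    _ = s / t := by field_simp
    _ ≤ s := div_le_self (by positivity) (by exact_mod_cast ht)

/-- space lower bound for the exact λ-set workload with
query time `t ≤ λ/α`. -/
theorem exact_set_workload_space_lower_bound
    (n lam B s t : ℕ) (α : ℝ) (hn : 0 < n) (hlam : 0 < lam) (hB : 0 < B)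
    (hs : 0 < s) (ht : 0 < t) (hln : lam ≤ n) (hts : t ≤ s)
    (hα1 : 1 ≤ α) (hαB : α ≤ (B : ℝ)) (htα : (t : ℝ) ≤ (lam : ℝ) / α)
    (𝓑 : Finset (Finset (Fin n))) (hcard : 𝓑.card = s)
    (hblocks : ∀ b ∈ 𝓑, b.card ≤ B)
    (hwork : ∀ Q : Finset (Fin n), Q.card = lam →
      ∃ 𝓒 ⊆ 𝓑, 𝓒.card ≤ t ∧ Q ⊆ 𝓒.sup id) :
    (s : ℝ) ≥
      ((n : ℝ) * α / (Real.exp 1 * (lam : ℝ) * (B : ℝ))) ^ α :=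
  exact_set_workload_space_lower_bound_general n lam B s t α hlam hB hs ht hln hts hα1 htα 𝓑 hcard
    hblocks hwork
end

section
/- Let n, d, k, δ be positive integers and let Γ be a function from {1,…,n} to subsets of {1,…,d} with |Γ(i)| = δ for every i. Assume the expansion property: for every S ⊆ {1,…,n} with |S| ≤ 2k one has 3·|Γ(S)| ≥ 2·δ·|S|, where Γ(S) := ⋃_{i∈S} Γ(i). For i ∈ {1,…,n} define p_i ∈ ℝᵈ by (p_i)_j = 1 if j ∈ Γ(i) and 0 otherwise, and for I ⊆ {1,…,n} with |I| = k define q_I ∈ ℝᵈ by (q_I)_j = 1/2 if j ∈ Γ(I) and −1/2 otherwise. Then, with ‖·‖∞ the supremum norm on ℝᵈ: (a) ‖p_i − q_I‖∞ = 1/2 for every i ∈ I; (b) ‖p_i − q_I‖∞ = 3/2 for every i with Γ(i) ⊄ Γ(I); and (c) the set I' := {i ∈ {1,…,n} : ‖p_i − q_I‖∞ ≤ 1/2} satisfies I ⊆ I' and 2·|I'| ≤ 3·k. -/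
/-!
Every coordinate of `p i - q I` has absolute value `1/2`, except those in `Γ i \ Γ(I)`, where
it is `3/2`; so `‖p i - q I‖∞` is `1/2` or `3/2` according as `Γ i ⊆ Γ(I)` or not. Hence
`Γ(I') ⊆ Γ(I)`, a set of at most `kδ` elements. Applied to a subset `S ⊆ I'` of size
`min(|I'|, 2k)`, expansion gives `2δ|S| ≤ 3kδ`, which forces `S = I'` and `2|I'| ≤ 3k`.
-/

open Finset

section SupNorm

variable {ι : Type*}

lemma abs_indicator_sub_signHalf [DecidableEq ι] (A B : Finset ι) (j : ι) :
    |(if j ∈ A then (1 : ℝ) else 0) - (if j ∈ B then 1/2 else -1/2)| =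
      if j ∈ A ∧ j ∉ B then 3/2 else 1/2 := by
  by_cases hA : j ∈ A <;> by_cases hB : j ∈ B <;> simp [hA, hB] <;> norm_num [abs_of_pos]

lemma pi_norm_eq_of_forall_abs_le [Fintype ι] {x : ι → ℝ} {c : ℝ} (hle : ∀ j, |x j| ≤ c) (j₀ : ι)
    (hj₀ : |x j₀| = c) : ‖x‖ = c := by
  refine le_antisymm ((pi_norm_le_iff_of_nonneg (hj₀ ▸ abs_nonneg _)).2 hle) ?_
  rw [← hj₀, ← Real.norm_eq_abs]
  exact norm_le_pi_norm x j₀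

lemma norm_indicator_sub_signHalf [Fintype ι] [DecidableEq ι] [Nonempty ι] {A B : Finset ι} {x : ι → ℝ}
    (hx : ∀ j, x j = (if j ∈ A then 1 else 0) - (if j ∈ B then 1/2 else -1/2)) :
    ‖x‖ = if A ⊆ B then 1/2 else 3/2 := by
  have habs (j : ι) : |x j| = if j ∈ A ∧ j ∉ B then 3/2 else 1/2 := by
    rw [hx, abs_indicator_sub_signHalf]
  split_ifs with hAB
  · have hhalf (j : ι) : |x j| = 1/2 := by
      rw [habs, if_neg fun h => h.2 (hAB h.1)]
    exact pi_norm_eq_of_forall_abs_le (fun j => (hhalf j).le) (Classical.arbitrary ι)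
      (hhalf _)
  · obtain ⟨j₀, hA, hB⟩ := not_subset.1 hAB
    refine pi_norm_eq_of_forall_abs_le (fun j => ?_) j₀ (by rw [habs, if_pos ⟨hA, hB⟩])
    rw [habs]
    split_ifs <;> norm_num

end SupNorm

section Expansion

variable {α β : Type*} [DecidableEq β] (Γ : α → Finset β) {k δ : ℕ}

lemma two_mul_card_le_of_expansion (hδ : 0 < δ)
    (hexp : ∀ S : Finset α, S.card ≤ 2 * k → 2 * δ * S.card ≤ 3 * (S.biUnion Γ).card)
    {I S : Finset α} (hdeg : ∀ i ∈ I, (Γ i).card ≤ δ) (hI : I.card ≤ k)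
    (hS : S.card ≤ 2 * k) (hSI : S.biUnion Γ ⊆ I.biUnion Γ) :
    2 * S.card ≤ 3 * k := by
  have hΓI : (I.biUnion Γ).card ≤ k * δ :=
    (card_biUnion_le_card_mul I Γ δ hdeg).trans (Nat.mul_le_mul_right δ hI)
  have : δ * (2 * S.card) ≤ δ * (3 * k) :=
    calc δ * (2 * S.card) = 2 * δ * S.card := by ring
      _ ≤ 3 * (S.biUnion Γ).card := hexp S hS
      _ ≤ 3 * (k * δ) := Nat.mul_le_mul_left 3 ((card_le_card hSI).trans hΓI)
      _ = δ * (3 * k) := by ring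
  exact Nat.le_of_mul_le_mul_left this hδ

lemma two_mul_card_le_of_biUnion_subset (hk : 0 < k) (hδ : 0 < δ)
    (hexp : ∀ S : Finset α, S.card ≤ 2 * k → 2 * δ * S.card ≤ 3 * (S.biUnion Γ).card)
    {I J : Finset α} (hdeg : ∀ i ∈ I, (Γ i).card ≤ δ) (hI : I.card ≤ k)
    (hJI : J.biUnion Γ ⊆ I.biUnion Γ) :
    2 * J.card ≤ 3 * k := by
  by_cases hJ : J.card ≤ 2 * k
  · exact two_mul_card_le_of_expansion Γ hδ hexp hdeg hI hJ hJI
  · -- A subset of `J` of size exactly `2k` would need `4k ≤ 3k`.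
    obtain ⟨S, hSJ, hS⟩ := exists_subset_card_eq (not_le.1 hJ).le
    have := two_mul_card_le_of_expansion Γ hδ hexp hdeg hI hS.le
      ((biUnion_subset_biUnion_of_subset_left Γ hSJ).trans hJI)
    omega

end Expansion

theorem linfty_expander_relaxed_workload_general
    (n d k δ : ℕ) (hd : 0 < d) (hk : 0 < k) (hδ : 0 < δ)
    (Γ : Fin n → Finset (Fin d)) (hdeg : ∀ i, (Γ i).card = δ)
    (hexp : ∀ S : Finset (Fin n), S.card ≤ 2 * k →
      2 * δ * S.card ≤ 3 * (S.biUnion Γ).card)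
    (p : Fin n → (Fin d → ℝ))
    (hp : ∀ i j, p i j = if j ∈ Γ i then 1 else 0)
    (q : Finset (Fin n) → (Fin d → ℝ))
    (hq : ∀ I j, q I j = if j ∈ I.biUnion Γ then 1/2 else -1/2) :
    ∀ I : Finset (Fin n), I.card = k →
      (∀ i ∈ I, ‖p i - q I‖ = 1/2) ∧
      (∀ i : Fin n, ¬ Γ i ⊆ I.biUnion Γ → ‖p i - q I‖ = 3/2) ∧
      (∀ I' : Finset (Fin n), (∀ i, i ∈ I' ↔ ‖p i - q I‖ ≤ 1/2) →
        I ⊆ I' ∧ 2 * I'.card ≤ 3 * k) := by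
  intro I hI
  have : Nonempty (Fin d) := ⟨⟨0, hd⟩⟩
  have hnorm (i : Fin n) : ‖p i - q I‖ = if Γ i ⊆ I.biUnion Γ then 1/2 else 3/2 :=
    norm_indicator_sub_signHalf fun j => by rw [Pi.sub_apply, hp, hq]
  have hsmall (i : Fin n) : ‖p i - q I‖ ≤ 1/2 ↔ Γ i ⊆ I.biUnion Γ := by
    rw [hnorm]; split_ifs <;> norm_num [*]
  refine ⟨fun i hi => ?_, fun i hi => by rw [hnorm, if_neg hi], fun I' hI' => ⟨?_, ?_⟩⟩
  · rw [hnorm, if_pos (subset_biUnion_of_mem Γ hi)]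
  · exact fun i hi => (hI' i).2 ((hsmall i).2 (subset_biUnion_of_mem Γ hi))
  · refine two_mul_card_le_of_biUnion_subset Γ hk hδ hexp (fun i _ => (hdeg i).le) hI.le ?_
    exact biUnion_subset.2 fun i hi => (hsmall i).1 ((hI' i).1 hi)

/-- expander-based point set in `ℓ∞` gives a relaxed `k`-set
workload in dimension `d`. -/
theorem linfty_expander_relaxed_workload
    (n d k δ : ℕ) (hn : 0 < n) (hd : 0 < d) (hk : 0 < k) (hδ : 0 < δ)
    (Γ : Fin n → Finset (Fin d)) (hdeg : ∀ i, (Γ i).card = δ)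
    (hexp : ∀ S : Finset (Fin n), S.card ≤ 2 * k →
      2 * δ * S.card ≤ 3 * (S.biUnion Γ).card)
    (p : Fin n → (Fin d → ℝ))
    (hp : ∀ i j, p i j = if j ∈ Γ i then 1 else 0)
    (q : Finset (Fin n) → (Fin d → ℝ))
    (hq : ∀ I j, q I j = if j ∈ I.biUnion Γ then 1/2 else -1/2) :
    ∀ I : Finset (Fin n), I.card = k →
      (∀ i ∈ I, ‖p i - q I‖ = 1/2) ∧
      (∀ i : Fin n, ¬ Γ i ⊆ I.biUnion Γ → ‖p i - q I‖ = 3/2) ∧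
      (∀ I' : Finset (Fin n), (∀ i, i ∈ I' ↔ ‖p i - q I‖ ≤ 1/2) →
        I ⊆ I' ∧ 2 * I'.card ≤ 3 * k) :=
  linfty_expander_relaxed_workload_general n d k δ hd hk hδ Γ hdeg hexp p hp q hq
end

section
/- There exists a constant C > 0 such that the following holds. Let n, k, B be positive integers with k even and 2 ≤ k ≤ n/2, let α be a real number with 1 ≤ α ≤ B, and let c be a real number with 0 ≤ c < 3. Then there exist a positive integer d ≤ C·k·log(2n/k) and a set P of n points in ℝᵈ (with the supremum norm) with the following property: for every positive integer t with t ≤ k/α, and every finite family 𝓑 of subsets of P, each of cardinality at most B, with t ≤ |𝓑|, such that for every q ∈ ℝᵈ there exist a subfamily 𝓒 ⊆ 𝓑 with |𝓒| ≤ t and a set S ⊆ ⋃𝓒 with |S| = k and ‖q − x‖∞ ≤ c·r for all x ∈ S, where r is the k-nearest-neighbor radius of q in P, one has |𝓑| ≥ ((1/(2e))·√(n·α/(k·B)))^α. -/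
/-!
The hard instance has `k` columns of `u = ⌊n/k⌋` points each, plus far-away padding. Every choice
`κ` of one point per column gives a query whose `k` nearest neighbours are exactly the chosen
points, at distance `1`, while all other points are at distance at least `3`; binary codes of
length `log₂ u + 1` realise this in `ℓ∞` of dimension `O(k log(n/k))`. A `c`-approximate answer
with `c < 3` must therefore return exactly the chosen points, and if it reads `t ≤ k/α` blocks,
one of them contains `⌈α⌉` of these points. A block holds at most `C(B, ⌈α⌉)` sets of `⌈α⌉` points,
and each such set lies in the answers of at most `u^(k - ⌈α⌉)` of the `u^k` queries, so there are
at least `u^⌈α⌉ / C(B, ⌈α⌉) ≥ (u ⌈α⌉ / (e B))^⌈α⌉` blocks.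
-/

/-- `r` is the `k`-nearest-neighbor radius of `q` in the finite point set `P`:
there is a set `T ⊆ P` of `k` points of `P` closest to `q`, and `r` is the
largest distance from `q` to a point of `T`. -/
def IsKNNRadius {M : Type*} [MetricSpace M] (P : Finset M) (k : ℕ) (q : M)
    (r : ℝ) : Prop :=
  ∃ T ⊆ P, T.card = k ∧
    (∀ x ∈ T, ∀ y ∈ P, y ∉ T → dist q x ≤ dist q y) ∧
    (∀ x ∈ T, dist q x ≤ r) ∧ (∃ x ∈ T, dist q x = r)

open Finset Function

section KNN

variable {M : Type*} [MetricSpace M]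

theorem isKNNRadius_of_forall_dist_eq {P T : Finset M} {q : M} {r : ℝ} (hTP : T ⊆ P)
    (hT : T.Nonempty) (hr : ∀ x ∈ T, dist q x = r) (hfar : ∀ y ∈ P, y ∉ T → r ≤ dist q y) :
    IsKNNRadius P #T q r := by
  obtain ⟨x, hx⟩ := hT
  exact ⟨T, hTP, rfl, fun x hx y hy hyT ↦ (hr x hx).trans_le (hfar y hy hyT),
    fun x hx ↦ (hr x hx).le, x, hx, hr x hx⟩

theorem eq_of_forall_dist_lt_of_card_le {P S T : Finset M} {q : M} {R : ℝ} (hSP : S ⊆ P)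
    (hTS : #T ≤ #S) (hfar : ∀ y ∈ P, y ∉ T → R ≤ dist q y) (hS : ∀ x ∈ S, dist q x < R) :
    S = T :=
  eq_of_subset_of_card_le (fun x hx ↦ by_contra fun hxT ↦
    (hS x hx).not_ge (hfar x (hSP hx) hxT)) hTS

end KNN

theorem Finset.exists_le_card_inter_of_subset_sup {X : Type*} [DecidableEq X]
    {𝓒 : Finset (Finset X)} {T : Finset X} {a : ℕ} (hT : T ⊆ 𝓒.sup id)
    (h : #𝓒 * (a - 1) < #T) : ∃ b ∈ 𝓒, a ≤ #(b ∩ T) := by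
  by_contra! hsmall
  have hcover : T ⊆ 𝓒.biUnion (· ∩ T) := fun x hx ↦ by
    obtain ⟨b, hb, hxb⟩ := mem_sup.1 (hT hx)
    exact mem_biUnion.2 ⟨b, hb, mem_inter.2 ⟨hxb, hx⟩⟩
  refine h.not_ge ((card_le_card hcover).trans ?_)
  exact card_biUnion_le_card_mul _ _ _ fun b hb ↦ Nat.le_sub_one_of_lt (hsmall b hb)

section Graphs

variable {α β : Type*} [Fintype α] [DecidableEq α] [Fintype β] [DecidableEq β]

theorem card_filter_forall_apply_eq_le (A : Finset (α × β)) :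
    #{κ : α → β | ∀ x ∈ A, κ x.1 = x.2} ≤ Fintype.card β ^ (Fintype.card α - #A) := by
  set s := ({κ : α → β | ∀ x ∈ A, κ x.1 = x.2} : Finset _)
  obtain hs | ⟨κ₀, hκ₀⟩ := s.eq_empty_or_nonempty
  · simp [hs]
  replace hκ₀ : ∀ x ∈ A, κ₀ x.1 = x.2 := (mem_filter.1 hκ₀).2
  set J := A.image Prod.fst
  have hJ : #J = #A := card_image_of_injOn fun x hx y hy hxy ↦
    Prod.ext hxy (by rw [← hκ₀ x hx, ← hκ₀ y hy, hxy])
  have hrestrict : Set.InjOn (fun (κ : α → β) (i : ↥Jᶜ) ↦ κ i) s := by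
    intro κ₁ h₁ κ₂ h₂ h
    funext i
    by_cases hi : i ∈ J
    · obtain ⟨x, hx, rfl⟩ := mem_image.1 hi
      rw [(mem_filter.1 h₁).2 x hx, (mem_filter.1 h₂).2 x hx]
    · exact congrFun h ⟨i, mem_compl.2 hi⟩
  calc #s ≤ #(univ : Finset (↥Jᶜ → β)) :=
        card_le_card_of_injOn _ (fun _ _ ↦ mem_coe.2 (mem_univ _)) hrestrict
    _ = Fintype.card β ^ (Fintype.card α - #A) := by simp [hJ]

theorem pow_card_le_card_mul_choose_of_le_card_graph_inter [Nonempty β]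
    {𝓑 : Finset (Finset (α × β))} {B a : ℕ} (hB : ∀ b ∈ 𝓑, #b ≤ B)
    (h : ∀ κ : α → β, ∃ b ∈ 𝓑, a ≤ #{i | (i, κ i) ∈ b}) :
    Fintype.card β ^ a ≤ #𝓑 * B.choose a := by
  have hsub : ∀ κ : α → β, ∃ A ∈ 𝓑.biUnion (powersetCard a), ∀ x ∈ A, κ x.1 = x.2 := by
    intro κ
    obtain ⟨b, hb, hab⟩ := h κ
    obtain ⟨J, hJ, hJa⟩ := exists_subset_card_eq hab
    refine ⟨J.image fun i ↦ (i, κ i), mem_biUnion.2 ⟨b, hb, mem_powersetCard.2 ⟨?_, ?_⟩⟩, ?_⟩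
    · intro x hx
      obtain ⟨i, hi, rfl⟩ := mem_image.1 hx
      exact (mem_filter.1 (hJ hi)).2
    · rwa [card_image_of_injective _ fun i j hij ↦ (Prod.ext_iff.1 hij).1]
    · simp
  choose F hF hFκ using hsub
  have haα : a ≤ Fintype.card α := by
    obtain ⟨b, -, hab⟩ := h (fun _ ↦ Classical.arbitrary β)
    exact hab.trans (card_le_univ _)
  have hfibre : #(univ : Finset (α → β)) ≤
      Fintype.card β ^ (Fintype.card α - a) * #(𝓑.biUnion (powersetCard a)) := by
    refine card_le_mul_card_image_of_maps_to (fun κ _ ↦ hF κ) _ fun A hA ↦ ?_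
    obtain ⟨b, -, hA⟩ := mem_biUnion.1 hA
    rw [← (mem_powersetCard.1 hA).2]
    refine (card_le_card fun κ hκ ↦ ?_).trans (card_filter_forall_apply_eq_le A)
    exact mem_filter.2 ⟨mem_univ κ, (mem_filter.1 hκ).2 ▸ hFκ κ⟩
  have hblocks : #(𝓑.biUnion (powersetCard a)) ≤ #𝓑 * B.choose a :=
    card_biUnion_le_card_mul _ _ _ fun b hb ↦ by
      rw [card_powersetCard]; exact Nat.choose_le_choose a (hB b hb)
  rw [card_univ, Fintype.card_fun, ← Nat.pow_sub_mul_pow _ haα] at hfibre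
  exact (Nat.le_of_mul_le_mul_left hfibre (pow_pos Fintype.card_pos _)).trans hblocks

end Graphs

structure IsHardInstance {α β M : Type*} [MetricSpace M] (P : Finset M) (p : α × β → M)
    (q : (α → β) → M) : Prop where
  injective : Injective p
  mem : ∀ x, p x ∈ P
  dist_eq_one : ∀ κ j, dist (q κ) (p (j, κ j)) = 1
  three_le_dist : ∀ κ, ∀ y ∈ P, (∀ j, p (j, κ j) ≠ y) → 3 ≤ dist (q κ) y

namespace IsHardInstance

variable {α β M N : Type*} [MetricSpace M] [MetricSpace N] {P : Finset M} {p : α × β → M}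
  {q : (α → β) → M}

theorem map (h : IsHardInstance P p q) (Φ : M ≃ᵢ N) :
    IsHardInstance (P.map Φ.toEquiv.toEmbedding) (Φ ∘ p) (Φ ∘ q) where
  injective := Φ.injective.comp h.injective
  mem x := mem_map_of_mem _ (h.mem x)
  dist_eq_one κ j := (Φ.dist_eq _ _).trans (h.dist_eq_one κ j)
  three_le_dist κ y hy hne := by
    obtain ⟨x, hx, rfl⟩ := mem_map.1 hy
    exact (h.three_le_dist κ x hx fun j hj ↦ hne j (congrArg Φ hj)).trans_eq (Φ.dist_eq _ _).symm

theorem injective_graph (h : IsHardInstance P p q) (κ : α → β) : Injective fun j ↦ p (j, κ j) :=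
  fun _ _ hij ↦ (Prod.ext_iff.1 (h.injective hij)).1

variable [Fintype α] [DecidableEq M]

def answer (p : α × β → M) (κ : α → β) : Finset M := univ.image fun j ↦ p (j, κ j)

theorem card_inter_answer (h : IsHardInstance P p q) (b : Finset M) (κ : α → β) :
    #(b ∩ answer p κ) = #{j | p (j, κ j) ∈ b} := by
  rw [answer, inter_comm, ← filter_mem_eq_inter, filter_image,
    card_image_of_injective _ (h.injective_graph κ)]

theorem card_answer (h : IsHardInstance P p q) (κ : α → β) : #(answer p κ) = Fintype.card α := by
  rw [answer, card_image_of_injective _ (h.injective_graph κ), card_univ]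

theorem three_le_dist_of_notMem_answer (h : IsHardInstance P p q) {κ : α → β} {y : M}
    (hy : y ∈ P) (hyK : y ∉ answer p κ) : 3 ≤ dist (q κ) y :=
  h.three_le_dist κ y hy fun j hj ↦ hyK (mem_image.2 ⟨j, mem_univ j, hj⟩)

theorem isKNNRadius [Nonempty α] (h : IsHardInstance P p q) (κ : α → β) :
    IsKNNRadius P (Fintype.card α) (q κ) 1 := by
  rw [← h.card_answer κ]
  refine isKNNRadius_of_forall_dist_eq ?_ (univ_nonempty.image _) ?_ fun y hy hyK ↦ ?_
  · exact image_subset_iff.2 fun j _ ↦ h.mem _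
  · simpa [answer] using h.dist_eq_one κ
  · linarith [h.three_le_dist_of_notMem_answer hy hyK]

theorem pow_card_le_card_mul_choose [Nonempty α] [DecidableEq α] [Fintype β] [DecidableEq β]
    [Nonempty β] (h : IsHardInstance P p q) {𝓑 : Finset (Finset M)} {B t a : ℕ} {c : ℝ}
    (hc : c < 3) (hta : t * (a - 1) < Fintype.card α) (h𝓑 : ∀ b ∈ 𝓑, b ⊆ P ∧ #b ≤ B)
    (hanswers : ∀ (q : M) (r : ℝ), IsKNNRadius P (Fintype.card α) q r →
      ∃ 𝓒 ⊆ 𝓑, #𝓒 ≤ t ∧ ∃ S ⊆ 𝓒.sup id, #S = Fintype.card α ∧ ∀ x ∈ S, dist q x ≤ c * r) :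
    Fintype.card β ^ a ≤ #𝓑 * B.choose a := by
  let pullback (b : Finset M) : Finset (α × β) := {x | p x ∈ b}
  refine le_trans ?_ (Nat.mul_le_mul_right _ (card_image_le (f := pullback)))
  refine pow_card_le_card_mul_choose_of_le_card_graph_inter (fun b' hb' ↦ ?_) fun κ ↦ ?_
  · obtain ⟨b, hb, rfl⟩ := mem_image.1 hb'
    exact (card_le_card_of_injOn p (fun x hx ↦ (mem_filter.1 hx).2)
      h.injective.injOn).trans (h𝓑 b hb).2
  obtain ⟨𝓒, h𝓒𝓑, h𝓒t, S, hS, hScard, hSdist⟩ := hanswers (q κ) 1 (h.isKNNRadius κ)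
  have hSP : S ⊆ P := hS.trans (Finset.sup_le fun b hb ↦ (h𝓑 b (h𝓒𝓑 hb)).1)
  have hSK : S = answer p κ :=
    eq_of_forall_dist_lt_of_card_le hSP (by rw [h.card_answer, hScard])
      (fun y hy hyK ↦ h.three_le_dist_of_notMem_answer hy hyK)
      fun x hx ↦ by linarith [hSdist x hx]
  obtain ⟨b, hb, hab⟩ := exists_le_card_inter_of_subset_sup (hSK ▸ hS)
    ((Nat.mul_le_mul_right _ h𝓒t).trans_lt (hta.trans_eq (h.card_answer κ).symm))
  refine ⟨pullback b, mem_image_of_mem _ (h𝓒𝓑 hb), ?_⟩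
  simpa [pullback, h.card_inter_answer] using hab

end IsHardInstance

section Construction

variable {α β γ : Type*} (e : β → γ → Bool)

/-- A coordinate `(j, t, s)` stands for "bit `t` of the code of the point chosen in column `j`
is `s`". -/
def codePoint [DecidableEq α] (x : α × β) : α × γ × Bool → ℝ :=
  fun y ↦ if y.1 = x.1 ∧ e x.2 y.2.1 = y.2.2 then 2 else 0

def codeQuery (κ : α → β) : α × γ × Bool → ℝ :=
  fun y ↦ if e (κ y.1) y.2.1 = y.2.2 then 1 else -1

def padPoint (s : ℕ) : α × γ × Bool → ℝ := fun _ ↦ s + 4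

variable {e}

theorem dist_codeQuery_codePoint [DecidableEq α] [Fintype α] [Fintype γ] [Nonempty γ]
    (κ : α → β) (j : α) : dist (codeQuery e κ) (codePoint e (j, κ j)) = 1 := by
  have hcoord : ∀ y, dist (codeQuery e κ y) (codePoint e (j, κ j) y) = 1 := by
    rintro ⟨j', t, s⟩
    by_cases hj : j' = j
    · subst hj
      by_cases hs : e (κ j') t = s <;> norm_num [codeQuery, codePoint, hs, Real.dist_eq]
    · by_cases hs : e (κ j') t = s <;> simp [codeQuery, codePoint, hj, hs]
  obtain ⟨t⟩ := ‹Nonempty γ›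
  exact le_antisymm ((dist_pi_le_iff zero_le_one).2 fun y ↦ (hcoord y).le)
    ((hcoord (j, t, true)).symm.trans_le (dist_le_pi_dist _ _ _))

theorem three_le_dist_codeQuery_codePoint [DecidableEq α] [Fintype α] [Fintype γ]
    (he : Injective e) {κ : α → β} {j : α} {i : β} (hi : i ≠ κ j) :
    3 ≤ dist (codeQuery e κ) (codePoint e (j, i)) := by
  obtain ⟨t, ht⟩ := Function.ne_iff.1 (he.ne hi)
  refine le_trans ?_ (dist_le_pi_dist _ _ (j, t, e i t))
  norm_num [codeQuery, codePoint, Ne.symm ht, Real.dist_eq]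

theorem codePoint_injective [DecidableEq α] [Nonempty γ] (he : Injective e) :
    Injective (codePoint e : α × β → α × γ × Bool → ℝ) := by
  rintro ⟨j, i⟩ ⟨j', i'⟩ hji
  have hcode : ∀ t, j = j' ∧ e i' t = e i t := fun t ↦ by
    simpa [codePoint] using (congrFun hji (j, t, e i t)).symm
  obtain ⟨t⟩ := ‹Nonempty γ›
  rw [(hcode t).1, he (funext fun t ↦ (hcode t).2.symm)]

theorem codePoint_ne_padPoint [DecidableEq α] [Nonempty γ] (x : α × β) (s : ℕ) :
    codePoint e x ≠ padPoint s := by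
  intro h
  obtain ⟨t⟩ := ‹Nonempty γ›
  have := congrFun h (x.1, t, true)
  unfold codePoint padPoint at this
  split_ifs at this <;> linarith [(s.cast_nonneg : (0 : ℝ) ≤ s)]

theorem padPoint_injective [Nonempty α] [Nonempty γ] :
    Injective (padPoint : ℕ → α × γ × Bool → ℝ) := by
  intro s s' h
  obtain ⟨j⟩ := ‹Nonempty α›
  obtain ⟨t⟩ := ‹Nonempty γ›
  simpa [padPoint] using congrFun h (j, t, true)

theorem three_le_dist_codeQuery_padPoint [Fintype α] [Nonempty α] [Fintype γ] [Nonempty γ]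
    (κ : α → β) (s : ℕ) : 3 ≤ dist (codeQuery e κ) (padPoint s) := by
  obtain ⟨j⟩ := ‹Nonempty α›
  obtain ⟨t⟩ := ‹Nonempty γ›
  refine le_trans ?_ (dist_le_pi_dist _ _ (j, t, true))
  rw [Real.dist_eq, abs_sub_comm, abs_of_nonneg] <;> unfold codeQuery padPoint <;> split_ifs <;>
    linarith [(s.cast_nonneg : (0 : ℝ) ≤ s)]

variable [DecidableEq α] [Fintype α] [Nonempty α] [Fintype β] [Fintype γ] [Nonempty γ]

theorem isHardInstance_codeQuery (he : Injective e) (N : ℕ) :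
    IsHardInstance (univ.image (codePoint e) ∪ (range N).image padPoint)
      (codePoint e : α × β → α × γ × Bool → ℝ) (codeQuery e) where
  injective := codePoint_injective he
  mem x := mem_union_left _ (mem_image_of_mem _ (mem_univ x))
  dist_eq_one := dist_codeQuery_codePoint
  three_le_dist κ y hy hne := by
    obtain hy | hy := mem_union.1 hy
    · obtain ⟨⟨j, i⟩, -, rfl⟩ := mem_image.1 hy
      exact three_le_dist_codeQuery_codePoint he fun hi ↦ hne j (by rw [hi])
    · obtain ⟨s, -, rfl⟩ := mem_image.1 hy
      exact three_le_dist_codeQuery_padPoint κ s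

theorem card_codePoint_union_padPoint (he : Injective e) (N : ℕ) :
    #(univ.image (codePoint e) ∪ (range N).image (padPoint : ℕ → α × γ × Bool → ℝ)) =
      Fintype.card α * Fintype.card β + N := by
  rw [card_union_of_disjoint, card_image_of_injective _ (codePoint_injective he),
    card_image_of_injective _ padPoint_injective, card_range, card_univ, Fintype.card_prod]
  simp only [disjoint_left, mem_image]
  rintro _ ⟨x, -, rfl⟩ ⟨s, -, hs⟩
  exact codePoint_ne_padPoint x s hs.symm

end Construction

theorem exists_isHardInstance {k u n : ℕ} (hk : 0 < k) (hkun : k * u ≤ n) :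
    ∃ P : Finset (Fin (2 * k * (Nat.log 2 u + 1)) → ℝ), #P = n ∧
      ∃ (p : Fin k × Fin u → Fin (2 * k * (Nat.log 2 u + 1)) → ℝ)
        (q : (Fin k → Fin u) → Fin (2 * k * (Nat.log 2 u + 1)) → ℝ), IsHardInstance P p q := by
  set m := Nat.log 2 u + 1
  have : Nonempty (Fin k) := Fin.pos_iff_nonempty.1 hk
  have hcode : Nonempty (Fin u ↪ (Fin m → Bool)) := Embedding.nonempty_of_card_le <| by
    simpa using (Nat.lt_pow_succ_log_self one_lt_two u).le
  obtain ⟨e⟩ := hcode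
  have hcard : Fintype.card (Fin k × Fin m × Bool) = 2 * k * m := by simp; ring
  let Φ := IsometryEquiv.piCongrLeft' (Y := fun _ ↦ ℝ) (Fintype.equivFinOfCardEq hcard)
  refine ⟨_, ?_, _, _, (isHardInstance_codeQuery e.injective (n - k * u)).map Φ⟩
  rw [card_map, card_codePoint_union_padPoint e.injective]
  simp [Nat.add_sub_cancel' hkun]

open Real

theorem Nat.choose_le_exp_mul_div_pow_s7 (B a : ℕ) : (B.choose a : ℝ) ≤ (exp 1 * B / a) ^ a := by
  obtain rfl | ha := a.eq_zero_or_pos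
  · simp
  calc (B.choose a : ℝ) ≤ B ^ a / a.factorial := Nat.choose_le_pow_div a B
    _ = (B / a) ^ a * (a ^ a / a.factorial) := by
        rw [← mul_div_assoc, ← mul_pow, div_mul_cancel₀ _ (by positivity)]
    _ ≤ (B / a) ^ a * exp a := by gcongr; exact pow_div_factorial_le_exp _ a.cast_nonneg a
    _ = (exp 1 * B / a) ^ a := by rw [← exp_one_pow, ← mul_pow, mul_div_assoc, mul_comm]

theorem two_mul_log_add_one_le {k u n : ℕ} (hk : 0 < k) (hu : 0 < u) (hkun : k * u ≤ n) :
    ((2 * k * (Nat.log 2 u + 1) : ℕ) : ℝ) ≤ 4 * k * log (2 * n / k) := by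
  have hpow : 2 ^ (Nat.log 2 u + 1) * k ≤ 2 * n := calc
    2 ^ (Nat.log 2 u + 1) * k = 2 * (2 ^ Nat.log 2 u * k) := by ring
    _ ≤ 2 * (u * k) := by gcongr; exact Nat.pow_log_le_self 2 hu.ne'
    _ ≤ 2 * n := by rw [mul_comm u]; gcongr
  have hlog : (Nat.log 2 u + 1 : ℝ) * log 2 ≤ log (2 * n / k) := by
    rw [← Nat.cast_succ, ← log_pow]
    refine log_le_log (by positivity) ?_
    rw [le_div_iff₀ (by positivity)]
    exact_mod_cast hpow
  have hm : (Nat.log 2 u + 1 : ℝ) ≤ 2 * log (2 * n / k) := by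
    nlinarith [log_two_gt_d9, (Nat.log 2 u).cast_nonneg (α := ℝ)]
  push_cast
  nlinarith [mul_le_mul_of_nonneg_left hm (by positivity : (0 : ℝ) ≤ k)]

theorem rpow_le_of_pow_ceil_le_mul_choose {n k u B N : ℕ} {α : ℝ} (hk : 0 < k) (hα : 1 ≤ α)
    (hαB : α ≤ B) (hN : 1 ≤ N) (hn : n ≤ 2 * k * u) (h : u ^ ⌈α⌉₊ ≤ N * B.choose ⌈α⌉₊) :
    ((1 / (2 * exp 1)) * √(n * α / (k * B))) ^ α ≤ N := by
  set a := ⌈α⌉₊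
  set x : ℝ := n * α / (k * B)
  set y := 1 / (2 * exp 1) * √x
  rcases le_or_gt y 1 with hy | hy
  · exact (rpow_le_one (by positivity) hy (by linarith)).trans (by exact_mod_cast hN)
  have hαa : α ≤ a := Nat.le_ceil α
  have hB : (0 : ℝ) < B := by linarith
  have hBa : 0 < B.choose a := Nat.choose_pos (Nat.ceil_le.2 hαB)
  have hx : 1 ≤ x := by
    have h2e : 2 ≤ 2 * exp 1 := by linarith [add_one_le_exp 1]
    have : 1 < √x := by
      by_contra! hx
      refine hy.not_ge ?_
      simp only [y]
      rw [one_div_mul_eq_div, div_le_one (by positivity)]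
      linarith
    simpa using ((lt_sqrt zero_le_one).1 this).le
  have hkey : y * (exp 1 * B / a) ≤ u := calc
    y * (exp 1 * B / a) ≤ y * (exp 1 * B / α) := by gcongr
    _ = √x * (B / (2 * α)) := by simp only [y]; field_simp
    _ ≤ x * (B / (2 * α)) := by
        gcongr; exact (sqrt_le_left (by linarith)).2 (by nlinarith)
    _ = n / (2 * k) := by simp only [x]; field_simp
    _ ≤ u := by rw [div_le_iff₀ (by positivity)]; exact_mod_cast (by linarith : n ≤ u * (2 * k))
  clear_value y
  calc y ^ α ≤ y ^ (a : ℝ) := rpow_le_rpow_of_exponent_le hy.le hαa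
    _ = (y * (exp 1 * B / a)) ^ a / (exp 1 * B / a) ^ a := by
        rw [rpow_natCast, mul_pow, mul_div_cancel_right₀ _ (by positivity)]
    _ ≤ u ^ a / B.choose a :=
        div_le_div₀ (by positivity) (pow_le_pow_left₀ (by positivity) hkey a)
          (by exact_mod_cast hBa) (Nat.choose_le_exp_mul_div_pow_s7 B a)
    _ ≤ N := div_le_of_le_mul₀ (by positivity) (by positivity) (by exact_mod_cast h)

theorem mul_ceil_sub_one_lt {t k : ℕ} {α : ℝ} (ht : 0 < t) (hα : 0 < α)
    (htk : (t : ℝ) ≤ k / α) : t * (⌈α⌉₊ - 1) < k := by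
  have hceil : ((⌈α⌉₊ - 1 : ℕ) : ℝ) < α := by
    rw [Nat.cast_sub (Nat.one_le_ceil_iff.2 hα), Nat.cast_one]
    linarith [Nat.ceil_lt_add_one hα.le]
  exact_mod_cast calc (t * (⌈α⌉₊ - 1 : ℕ) : ℝ) < t * α := by gcongr
    _ ≤ k := (le_div_iff₀ hα).1 htk

/-- Theorem 1, lower bound for `(c,k)`-NN in `ℓ∞`:
any indexing scheme with query time `t ≤ k/α` I/Os for `c`-approximate
`k`-nearest-neighbor queries on a suitable `n`-point set in dimension
`d = O(k log(n/k))` must use `((1/(2e))·√(nα/(kB)))^α` blocks. -/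
theorem linfty_knn_indexing_lower_bound :
    ∃ C : ℝ, 0 < C ∧
      ∀ n k B : ℕ, 0 < n → 0 < k → 0 < B → Even k → 2 ≤ k → 2 * k ≤ n →
      ∀ α : ℝ, 1 ≤ α → α ≤ (B : ℝ) →
      ∀ c : ℝ, 0 ≤ c → c < 3 →
      ∃ d : ℕ, 0 < d ∧ (d : ℝ) ≤ C * k * Real.log (2 * (n : ℝ) / k) ∧
      ∃ P : Finset (Fin d → ℝ), P.card = n ∧
        ∀ t : ℕ, 0 < t → (t : ℝ) ≤ (k : ℝ) / α →
        ∀ 𝓑 : Finset (Finset (Fin d → ℝ)),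
          (∀ b ∈ 𝓑, b ⊆ P ∧ b.card ≤ B) → t ≤ 𝓑.card →
          (∀ q : Fin d → ℝ, ∀ r : ℝ, IsKNNRadius P k q r →
            ∃ 𝓒 ⊆ 𝓑, 𝓒.card ≤ t ∧
              ∃ S ⊆ 𝓒.sup id, S.card = k ∧ ∀ x ∈ S, dist q x ≤ c * r) →
          (𝓑.card : ℝ) ≥
            ((1 / (2 * Real.exp 1)) *
              Real.sqrt ((n : ℝ) * α / ((k : ℝ) * (B : ℝ)))) ^ α := by
  refine ⟨4, by norm_num, fun n k B _ hk _ _ _ hkn α hα hαB c _ hc ↦ ?_⟩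
  set u := n / k
  have hu : 0 < u := Nat.div_pos (by omega) hk
  have hkun : k * u ≤ n := Nat.mul_div_le n k
  have hn : n ≤ 2 * k * u := by
    have hlt : n < k * (u + 1) := Nat.lt_mul_div_succ n hk
    nlinarith
  obtain ⟨P, hP, p, q, hhard⟩ := exists_isHardInstance hk hkun
  refine ⟨_, by positivity, two_mul_log_add_one_le hk hu hkun, P, hP,
    fun t ht htk 𝓑 h𝓑 ht𝓑 hanswers ↦ ?_⟩
  have : NeZero k := ⟨hk.ne'⟩
  have : NeZero u := ⟨hu.ne'⟩
  have hcount := hhard.pow_card_le_card_mul_choose hc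
    (by simpa using mul_ceil_sub_one_lt ht (by linarith) htk) h𝓑 (by simpa using hanswers)
  rw [Fintype.card_fin] at hcount
  exact rpow_le_of_pow_ceil_le_mul_choose hk hα hαB (ht.trans_le ht𝓑) hn hcount
end

section
/- Let n, d, k, δ be positive integers with k ≥ 2, and let Γ be a function from {1,…,n} to subsets of {1,…,d} with |Γ(i)| = δ for every i. Assume the expansion property: for every S ⊆ {1,…,n} with |S| ≤ 2k one has 4·|Γ(S)| ≥ 3·δ·|S|, where Γ(S) := ⋃_{i∈S} Γ(i). For i ∈ {1,…,n} let p_i ∈ {0,1}ᵈ be the characteristic vector of Γ(i), and for I ⊆ {1,…,n} with |I| = k let q_I ∈ {0,1}ᵈ be the characteristic vector of Γ(I). Then: (a) for every j ∈ {1,…,n}, hammingDist(p_j, q_I) = |Γ(I)| − δ + 2·|Γ(j)∖Γ(I)|; in particular hammingDist(p_i, q_I) = |Γ(I)| − δ for every i ∈ I; and (b) the set I' := {j ∈ {1,…,n} : hammingDist(p_j, q_I) ≤ (1 + 1/(4(k−1)))·(|Γ(I)| − δ)} satisfies I ⊆ I' and 2·|I'| ≤ 3·k. -/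
/-!
Outside Γ(I) ∪ Γ(j) the vectors p_j and q_I agree, so their distance is |Γ(I) \ Γ(j)| + |Γ(j) \ Γ(I)|,
which gives (a). Since |Γ(I)| ≤ kδ, membership of j in I' forces 8·|Γ(j) \ Γ(I)| ≤ δ. For J ⊆ I' \ I
with |J| ≤ k, expansion of I ∪ J then reads 3δ(k + |J|) ≤ 4(kδ + |J|δ/8), i.e. 5|J| ≤ 2k. Hence
I' \ I has fewer than k elements, and the same bound applied to I' \ I itself gives 2|I'| ≤ 3k.
-/

open Finset

theorem eight_mul_le_of_le_one_add_inv_mul {c D e δ : ℝ} (hc : 0 < c) (hD : D ≤ c * δ)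
    (h : D + 2 * e ≤ (1 + 1 / (4 * c)) * D) : 8 * e ≤ δ := by
  have h' : 8 * e * c ≤ D := by
    have := mul_le_mul_of_nonneg_left h (by positivity : (0 : ℝ) ≤ 4 * c)
    field_simp at this
    nlinarith
  exact le_of_mul_le_mul_right (by linarith) hc

section HammingExpander

variable {ι α : Type*}

theorem card_lt_of_forall_subset_card_le_imp_lt {s : Finset α} {k : ℕ}
    (h : ∀ t ⊆ s, #t ≤ k → #t < k) : #s < k := by
  by_contra! hks
  obtain ⟨t, hts, htk⟩ := exists_subset_card_eq hks
  exact (h t hts htk.le).ne htk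

variable [DecidableEq α]

theorem hammingDist_decide_mem [Fintype α] (s t : Finset α) :
    hammingDist (fun x => decide (x ∈ s)) (fun x => decide (x ∈ t)) = #(s \ t) + #(t \ s) := by
  rw [hammingDist, ← card_union_of_disjoint disjoint_sdiff_sdiff]
  congr 1
  ext x
  simp only [mem_filter, mem_univ, true_and, mem_union, mem_sdiff, ne_eq, decide_eq_decide]
  tauto

theorem card_sdiff_add_card_sdiff_of_card_le {s t : Finset α} (h : #s ≤ #t) :
    #(s \ t) + #(t \ s) = #t - #s + 2 * #(s \ t) := by
  have hs := card_sdiff_add_card_inter s t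
  have ht := card_sdiff_add_card_inter t s
  rw [inter_comm] at ht
  omega

theorem card_biUnion_le_of_card_le {Γ : ι → Finset α} {s : Finset ι} {δ : ℕ}
    (hΓ : ∀ i ∈ s, #(Γ i) ≤ δ) : #(s.biUnion Γ) ≤ #s * δ :=
  card_biUnion_le.trans (sum_le_card_nsmul s _ δ hΓ)

theorem card_biUnion_union_le (Γ : ι → Finset α) (s t : Finset ι) [DecidableEq ι] :
    #((s ∪ t).biUnion Γ) ≤ #(s.biUnion Γ) + ∑ j ∈ t, #(Γ j \ s.biUnion Γ) := by
  have hsub : (s ∪ t).biUnion Γ ⊆ s.biUnion Γ ∪ t.biUnion (fun j => Γ j \ s.biUnion Γ) := by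
    intro x
    simp only [mem_biUnion, mem_union, mem_sdiff]
    grind
  calc #((s ∪ t).biUnion Γ) ≤ #(s.biUnion Γ ∪ t.biUnion (fun j => Γ j \ s.biUnion Γ)) :=
        card_le_card hsub
    _ ≤ _ := (card_union_le _ _).trans (Nat.add_le_add_left card_biUnion_le _)

theorem five_mul_card_le_of_expansion [DecidableEq ι] {Γ : ι → Finset α} {δ : ℕ} {I J : Finset ι}
    (hδ : 0 < δ) (hdeg : ∀ i ∈ I, #(Γ i) ≤ δ) (hIJ : Disjoint I J)
    (hexp : 3 * δ * #(I ∪ J) ≤ 4 * #((I ∪ J).biUnion Γ))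
    (hJ : ∀ j ∈ J, 8 * #(Γ j \ I.biUnion Γ) ≤ δ) :
    5 * #J ≤ 2 * #I := by
  have hI := card_biUnion_le_of_card_le hdeg
  have hJ' : 8 * ∑ j ∈ J, #(Γ j \ I.biUnion Γ) ≤ #J * δ := by
    rw [mul_sum]
    exact sum_le_card_nsmul J _ δ hJ
  have hU := card_biUnion_union_le Γ I J
  rw [card_union_of_disjoint hIJ] at hexp
  have : 5 * #J * δ ≤ 2 * #I * δ := by nlinarith
  exact Nat.le_of_mul_le_mul_right this hδ

end HammingExpander

theorem hamming_expander_relaxed_workload_general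
    (n d k δ : ℕ) (hk : 2 ≤ k) (hδ : 0 < δ)
    (Γ : Fin n → Finset (Fin d)) (hdeg : ∀ i, (Γ i).card = δ)
    (hexp : ∀ S : Finset (Fin n), S.card ≤ 2 * k →
      3 * δ * S.card ≤ 4 * (S.biUnion Γ).card)
    (p : Fin n → (Fin d → Bool))
    (hp : ∀ i j, p i j = if j ∈ Γ i then true else false)
    (q : Finset (Fin n) → (Fin d → Bool))
    (hq : ∀ I j, q I j = if j ∈ I.biUnion Γ then true else false) :
    ∀ I : Finset (Fin n), I.card = k →
      (∀ j : Fin n, hammingDist (p j) (q I) =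
        (I.biUnion Γ).card - δ + 2 * ((Γ j) \ (I.biUnion Γ)).card) ∧
      (∀ i ∈ I, hammingDist (p i) (q I) = (I.biUnion Γ).card - δ) ∧
      (∀ I' : Finset (Fin n),
        (∀ j, j ∈ I' ↔ (hammingDist (p j) (q I) : ℝ) ≤
          (1 + 1 / (4 * ((k : ℝ) - 1))) * (((I.biUnion Γ).card : ℝ) - (δ : ℝ))) →
        I ⊆ I' ∧ 2 * I'.card ≤ 3 * k) := by
  intro I hI
  set B := I.biUnion Γ
  obtain ⟨i₀, hi₀⟩ : I.Nonempty := card_pos.mp (by omega)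
  have hδB : δ ≤ #B := hdeg i₀ ▸ card_le_card (subset_biUnion_of_mem Γ hi₀)
  have hdist (j : Fin n) : hammingDist (p j) (q I) = #B - δ + 2 * #(Γ j \ B) := by
    have hpj : p j = fun x => decide (x ∈ Γ j) := funext fun x => by simp [hp]
    have hqI : q I = fun x => decide (x ∈ B) := funext fun x => by simp [hq, B]
    rw [hpj, hqI, hammingDist_decide_mem, card_sdiff_add_card_sdiff_of_card_le (by rwa [hdeg]),
      hdeg]
  have hdist_mem (i : Fin n) (hi : i ∈ I) : hammingDist (p i) (q I) = #B - δ := by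
    rw [hdist, sdiff_eq_empty_iff_subset.mpr (subset_biUnion_of_mem Γ hi), card_empty, mul_zero,
      add_zero]
  refine ⟨hdist, hdist_mem, fun I' hI' => ?_⟩
  have hk₁ : (0 : ℝ) < k - 1 := by
    have : (2 : ℝ) ≤ k := by exact_mod_cast hk
    linarith
  have hBk : (#B : ℝ) - δ ≤ (k - 1) * δ := by
    have : #B ≤ k * δ := hI ▸ card_biUnion_le_of_card_le fun i _ => (hdeg i).le
    have : (#B : ℝ) ≤ k * δ := by exact_mod_cast this
    linarith
  have hI_sub : I ⊆ I' := fun i hi => (hI' i).2 <| by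
    rw [hdist_mem i hi, Nat.cast_sub hδB]
    exact le_mul_of_one_le_left (by linarith [(Nat.cast_le (α := ℝ)).2 hδB])
      (le_add_of_nonneg_right (by positivity))
  have hnear (j : Fin n) (hj : j ∈ I') : 8 * #(Γ j \ B) ≤ δ := by
    have h := (hI' j).1 hj
    rw [hdist, Nat.cast_add, Nat.cast_sub hδB, Nat.cast_mul, Nat.cast_ofNat] at h
    exact_mod_cast eight_mul_le_of_le_one_add_inv_mul hk₁ hBk h
  have hexpand (J : Finset (Fin n)) (hJ : J ⊆ I' \ I) (hJk : #J ≤ k) : 5 * #J ≤ 2 * k :=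
    hI ▸ five_mul_card_le_of_expansion hδ (fun i _ => (hdeg i).le)
      (disjoint_of_subset_right hJ disjoint_sdiff)
      (hexp _ ((card_union_le I J).trans (by omega)))
      (fun j hj => hnear j (mem_sdiff.1 (hJ hj)).1)
  have hT : #(I' \ I) < k := card_lt_of_forall_subset_card_le_imp_lt fun J hJ hJk => by
    have := hexpand J hJ hJk
    omega
  have := hexpand _ subset_rfl hT.le
  have := card_le_card_sdiff_add_card (s := I') (t := I)
  exact ⟨hI_sub, by omega⟩

/-- expander-based point set in Hamming space gives a relaxed
`k`-set workload in dimension `d`. -/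
theorem hamming_expander_relaxed_workload
    (n d k δ : ℕ) (hn : 0 < n) (hd : 0 < d) (hk : 2 ≤ k) (hδ : 0 < δ)
    (Γ : Fin n → Finset (Fin d)) (hdeg : ∀ i, (Γ i).card = δ)
    (hexp : ∀ S : Finset (Fin n), S.card ≤ 2 * k →
      3 * δ * S.card ≤ 4 * (S.biUnion Γ).card)
    (p : Fin n → (Fin d → Bool))
    (hp : ∀ i j, p i j = if j ∈ Γ i then true else false)
    (q : Finset (Fin n) → (Fin d → Bool))
    (hq : ∀ I j, q I j = if j ∈ I.biUnion Γ then true else false) :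
    ∀ I : Finset (Fin n), I.card = k →
      (∀ j : Fin n, hammingDist (p j) (q I) =
        (I.biUnion Γ).card - δ + 2 * ((Γ j) \ (I.biUnion Γ)).card) ∧
      (∀ i ∈ I, hammingDist (p i) (q I) = (I.biUnion Γ).card - δ) ∧
      (∀ I' : Finset (Fin n),
        (∀ j, j ∈ I' ↔ (hammingDist (p j) (q I) : ℝ) ≤
          (1 + 1 / (4 * ((k : ℝ) - 1))) * (((I.biUnion Γ).card : ℝ) - (δ : ℝ))) →
        I ⊆ I' ∧ 2 * I'.card ≤ 3 * k) :=
  hamming_expander_relaxed_workload_general n d k δ hk hδ Γ hdeg hexp p hp q hq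
end

section
/- Let M be a metric space, P a finite set of points in M with |P| = n, and k an integer with 1 ≤ k ≤ n. Let q ∈ M and let r be the k-nearest-neighbor radius of q in P. Let p* ∈ P satisfy dist(q, p*) ≤ dist(q, y) for all y ∈ P (p* is a nearest neighbor of q in P). Let S ⊆ P with |S| = k be a set of k nearest neighbors of p* in P, i.e., dist(p*, x) ≤ dist(p*, y) for all x ∈ S and y ∈ P∖S. Then dist(q, x) ≤ 3·r for every x ∈ S. -/
theorem Finset.exists_mem_le_of_card_le {α β : Type*} [Preorder β] (f : α → β)
    {P S T : Finset α} (hS : ∀ x ∈ S, ∀ y ∈ P, y ∉ S → f x ≤ f y) (hTP : T ⊆ P)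
    (hcard : S.card ≤ T.card) : ∀ x ∈ S, ∃ y ∈ T, f x ≤ f y := by
  intro x hxS
  by_cases hxT : x ∈ T
  · exact ⟨x, hxT, le_rfl⟩
  · have hTS : ¬ T ⊆ S := fun hTS => hxT (Finset.eq_of_subset_of_card_le hTS hcard ▸ hxS)
    obtain ⟨y, hyT, hyS⟩ := Finset.not_subset.mp hTS
    exact ⟨y, hyT, hS x hxS y (hTP hyT) hyS⟩

theorem IsKNNRadius.dist_le_two_mul {M : Type*} [MetricSpace M] {P S : Finset M} {k : ℕ}
    {q p : M} {r : ℝ} (hr : IsKNNRadius P k q r) (hpq : dist q p ≤ r) (hScard : S.card = k)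
    (hSnn : ∀ x ∈ S, ∀ y ∈ P, y ∉ S → dist p x ≤ dist p y) :
    ∀ x ∈ S, dist p x ≤ 2 * r := by
  obtain ⟨T, hTP, hTcard, -, hTle, -⟩ := hr
  intro x hxS
  obtain ⟨y, hyT, hxy⟩ :=
    Finset.exists_mem_le_of_card_le (dist p) hSnn hTP (hScard.trans hTcard.symm).le x hxS
  calc dist p x ≤ dist p y := hxy
    _ ≤ dist p q + dist q y := dist_triangle _ _ _
    _ ≤ r + r := add_le_add (dist_comm p q ▸ hpq) (hTle y hyT)
    _ = 2 * r := (two_mul r).symm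

theorem IsKNNRadius.dist_le_of_forall_le {M : Type*} [MetricSpace M] {P : Finset M} {k : ℕ}
    {q : M} {r d : ℝ} (hr : IsKNNRadius P k q r) (hd : ∀ y ∈ P, d ≤ dist q y) : d ≤ r := by
  obtain ⟨T, hTP, -, -, -, x, hxT, hxr⟩ := hr
  exact hxr ▸ hd x (hTP hxT)

theorem three_approx_via_nearest_neighbor_general
    {M : Type*} [MetricSpace M] (P : Finset M) (k : ℕ)
    (q : M) (r : ℝ) (hr : IsKNNRadius P k q r)
    (pstar : M)
    (hnear : ∀ y ∈ P, dist q pstar ≤ dist q y)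
    (S : Finset M) (hScard : S.card = k)
    (hSnn : ∀ x ∈ S, ∀ y ∈ P, y ∉ S → dist pstar x ≤ dist pstar y) :
    ∀ x ∈ S, dist q x ≤ 3 * r := by
  have hqp : dist q pstar ≤ r := hr.dist_le_of_forall_le hnear
  intro x hxS
  have hpx : dist pstar x ≤ 2 * r := hr.dist_le_two_mul hqp hScard hSnn x hxS
  calc dist q x ≤ dist q pstar + dist pstar x := dist_triangle _ _ _
    _ ≤ 3 * r := by linarith

/-- the `k` nearest neighbors of the nearest neighbor of `q`
are all `3`-approximate `k`-nearest neighbors of `q`. -/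
theorem three_approx_via_nearest_neighbor
    {M : Type*} [MetricSpace M] (P : Finset M) (n k : ℕ)
    (hP : P.card = n) (hk1 : 1 ≤ k) (hkn : k ≤ n)
    (q : M) (r : ℝ) (hr : IsKNNRadius P k q r)
    (pstar : M) (hpstar : pstar ∈ P)
    (hnear : ∀ y ∈ P, dist q pstar ≤ dist q y)
    (S : Finset M) (hSP : S ⊆ P) (hScard : S.card = k)
    (hSnn : ∀ x ∈ S, ∀ y ∈ P, y ∉ S → dist pstar x ≤ dist pstar y) :
    ∀ x ∈ S, dist q x ≤ 3 * r :=
  three_approx_via_nearest_neighbor_general P k q r hr pstar hnear S hScard hSnn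
end

section
/- Let M be a metric space, P a finite set of points in M with |P| = n, and k, B positive integers with k ≤ n. Then there exists a family 𝓑 of at most n·⌈k/B⌉ subsets of P, each of cardinality at most B, such that for every q ∈ M there exist a subfamily 𝓒 ⊆ 𝓑 with |𝓒| ≤ ⌈k/B⌉ and a set S ⊆ ⋃𝓒 with |S| = k such that dist(q, x) ≤ 3·r for all x ∈ S, where r is the k-nearest-neighbor radius of q in P. -/
open Finset

namespace Finset

variable {α : Type*} [DecidableEq α]

theorem exists_subset_card_eq_forall_le_of_notMem {β : Type*} [LinearOrder β] (f : α → β)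
    (s : Finset α) {k : ℕ} (hk : k ≤ #s) :
    ∃ t ⊆ s, #t = k ∧ ∀ x ∈ t, ∀ y ∈ s, y ∉ t → f x ≤ f y := by
  induction k with
  | zero => exact ⟨∅, empty_subset s, card_empty, by simp⟩
  | succ k ih =>
    obtain ⟨t, hts, htk, hlow⟩ := ih (Nat.le_of_succ_le hk)
    have hrest : (s \ t).Nonempty := by
      rw [← card_pos, card_sdiff_of_subset hts]
      omega
    obtain ⟨z, hz, hzmin⟩ := (s \ t).exists_min_image f hrest
    rw [mem_sdiff] at hz
    refine ⟨insert z t, insert_subset hz.1 hts, by rw [card_insert_of_notMem hz.2, htk], ?_⟩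
    intro x hx y hy hyt
    rw [mem_insert, not_or] at hyt
    rcases mem_insert.1 hx with rfl | hx
    · exact hzmin y (mem_sdiff.2 ⟨hy, hyt.2⟩)
    · exact hlow x hx y hy hyt.2

theorem exists_sup_id_eq_forall_card_le_of_card_le_mul (B : ℕ) {m : ℕ} :
    ∀ t : Finset α, #t ≤ m * B →
      ∃ 𝓒 : Finset (Finset α), #𝓒 ≤ m ∧ (∀ b ∈ 𝓒, #b ≤ B) ∧ 𝓒.sup id = t := by
  induction m with
  | zero =>
    intro t ht
    refine ⟨∅, le_rfl, by simp, ?_⟩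
    rw [zero_mul, Nat.le_zero, card_eq_zero] at ht
    rw [ht, sup_empty, bot_eq_empty]
  | succ m ih =>
    intro t ht
    obtain ⟨b, hbt, hb⟩ := exists_subset_card_eq (min_le_right B #t)
    obtain ⟨𝓒, h𝓒, hblocks, hsup⟩ := ih (t \ b) (by
      rw [card_sdiff_of_subset hbt, hb]
      rw [Nat.succ_mul] at ht
      omega)
    refine ⟨insert b 𝓒, (card_insert_le b 𝓒).trans (by omega), ?_, ?_⟩
    · intro c hc
      rcases mem_insert.1 hc with rfl | hc
      · exact hb.trans_le (min_le_left _ _)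
      · exact hblocks c hc
    · rw [sup_insert, hsup, id, sup_eq_union, union_sdiff_of_subset hbt]

end Finset

theorem dist_le_three_mul_of_mem_nearest {M : Type*} [MetricSpace M] {P T U : Finset M}
    {p q x : M} {r : ℝ} (hTP : T ⊆ P) (hUT : #U ≤ #T) (hT : ∀ y ∈ T, dist q y ≤ r)
    (hp : dist q p ≤ r) (hU : ∀ x ∈ U, ∀ y ∈ P, y ∉ U → dist p x ≤ dist p y) (hx : x ∈ U) :
    dist q x ≤ 3 * r := by
  by_cases hxT : x ∈ T
  · linarith [hT x hxT, dist_nonneg.trans hp]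
  · obtain ⟨y, hyT, hyU⟩ : ∃ y ∈ T, y ∉ U := by
      by_contra! hTU
      exact hxT ((eq_of_subset_of_card_le hTU hUT) ▸ hx)
    calc dist q x ≤ dist q p + dist p x := dist_triangle q p x
      _ ≤ dist q p + (dist p q + dist q y) := by
        gcongr
        exact (hU x hx y (hTP hyT) hyU).trans (dist_triangle p q y)
      _ ≤ 3 * r := by rw [dist_comm p q]; linarith [hT y hyT]

theorem general_metric_three_approx_indexing_scheme_general
    {M : Type*} [MetricSpace M] [DecidableEq M] (P : Finset M) (n k B : ℕ)
    (hP : P.card = n) (hk : 0 < k) (hB : 0 < B) (hkn : k ≤ n) :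
    ∃ 𝓑 : Finset (Finset M),
      𝓑.card ≤ n * ⌈(k : ℝ) / (B : ℝ)⌉₊ ∧
      (∀ b ∈ 𝓑, b ⊆ P ∧ b.card ≤ B) ∧
      ∀ q : M, ∀ r : ℝ, IsKNNRadius P k q r →
        ∃ 𝓒 ⊆ 𝓑, 𝓒.card ≤ ⌈(k : ℝ) / (B : ℝ)⌉₊ ∧
          ∃ S ⊆ 𝓒.sup id, S.card = k ∧ ∀ x ∈ S, dist q x ≤ 3 * r := by
  set m := ⌈(k : ℝ) / (B : ℝ)⌉₊
  have hkm : k ≤ m * B := by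
    have := (div_le_iff₀ (by exact_mod_cast hB : (0 : ℝ) < B)).1 (Nat.le_ceil ((k : ℝ) / B))
    exact_mod_cast this
  choose N hNP hNk hNnear using fun p : M =>
    P.exists_subset_card_eq_forall_le_of_notMem (dist p) (hP ▸ hkn)
  choose C hCm hCB hCN using fun p : M =>
    (N p).exists_sup_id_eq_forall_card_le_of_card_le_mul B (hNk p ▸ hkm)
  have hCP : ∀ p, ∀ b ∈ C p, b ⊆ P := fun p b hb =>
    (le_sup (f := id) hb).trans ((hCN p).trans_subset (hNP p))
  refine ⟨P.biUnion C, hP ▸ card_biUnion_le_card_mul P C m fun p _ => hCm p, ?_, ?_⟩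
  · simp only [mem_biUnion]
    rintro b ⟨p, -, hb⟩
    exact ⟨hCP p b hb, hCB p b hb⟩
  · rintro q r ⟨T, hTP, hTk, -, hTr, -⟩
    obtain ⟨p, hpT⟩ := card_pos.1 (hTk ▸ hk)
    refine ⟨C p, subset_biUnion_of_mem C (hTP hpT), hCm p, N p, (hCN p).ge, hNk p, ?_⟩
    exact fun x hx => dist_le_three_mul_of_mem_nearest hTP (by rw [hNk p, hTk]) hTr
      (hTr p hpT) (hNnear p) hx

/-- Theorem 2, general metric indexing scheme: for any `n`
points in a metric space there is a family of at most `n·⌈k/B⌉` blocks of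
size at most `B` answering `3`-approximate `k`-nearest-neighbor queries in
`⌈k/B⌉` I/Os. -/
theorem general_metric_three_approx_indexing_scheme
    {M : Type*} [MetricSpace M] [DecidableEq M] (P : Finset M) (n k B : ℕ)
    (hP : P.card = n) (hn : 0 < n) (hk : 0 < k) (hB : 0 < B) (hkn : k ≤ n) :
    ∃ 𝓑 : Finset (Finset M),
      𝓑.card ≤ n * ⌈(k : ℝ) / (B : ℝ)⌉₊ ∧
      (∀ b ∈ 𝓑, b ⊆ P ∧ b.card ≤ B) ∧
      ∀ q : M, ∀ r : ℝ, IsKNNRadius P k q r →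
        ∃ 𝓒 ⊆ 𝓑, 𝓒.card ≤ ⌈(k : ℝ) / (B : ℝ)⌉₊ ∧
          ∃ S ⊆ 𝓒.sup id, S.card = k ∧ ∀ x ∈ S, dist q x ≤ 3 * r :=
  general_metric_three_approx_indexing_scheme_general P n k B hP hk hB hkn
end
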